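/- arXiv:math/0401354 — 3 statements merged into one kernel-verified Lean document; each statement's English description precedes it below -/
import Mathlib

section
/- With notation as before (V a 2n-dimensional vector space over an algebraically closed field with non-degenerate quadratic form Q, orientation vol_Q, and the induced star operator ∗ on Λ^nV* with eigenspaces Λ^nV*₊ and Λ^nV*₋), the restriction of any antiselfdual n-form (element of Λ^nV*₋) to every maximal isotropic subspace in one of the two families of n-dimensional isotropic subspaces of Q vanishes, and the restriction of any selfdual n-form vanishes on every maximal isotropic subspace of the other family. -/
open ExteriorAlgebra

noncomputable section

variable (F : Type) [Field F] (V : Type) [AddCommGroup V] [Module F V]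

/-- The decomposable element `v₁ ∧ ... ∧ v_k` as an element of `⋀[F]^k V`. -/
def wedgeOf (k : ℕ) (v : Fin k → V) : ⋀[F]^k V :=
  ⟨ExteriorAlgebra.ιMulti F k v, ExteriorAlgebra.ιMulti_range F k (Set.mem_range_self v)⟩

set_option linter.unusedSectionVars false
set_option linter.unnecessarySeqFocus false
set_option linter.unreachableTactic false
set_option linter.unusedTactic false

namespace SDHelp

variable {F V}

lemma wedgeOf_coe (k : ℕ) (v : Fin k → V) :
    ((wedgeOf F V k v : ⋀[F]^k V) : ExteriorAlgebra F V) = ExteriorAlgebra.ιMulti F k v := rfl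

lemma iMulti_mul (p q : ℕ) (a : Fin p → V) (b : Fin q → V) :
    ExteriorAlgebra.ιMulti F p a * ExteriorAlgebra.ιMulti F q b
      = ExteriorAlgebra.ιMulti F (p + q) (Fin.append a b) := by
  have h : List.ofFn (fun i : Fin (p + q) => ι F (Fin.append a b i))
      = List.ofFn (fun i : Fin p => ι F (a i)) ++ List.ofFn (fun i : Fin q => ι F (b i)) := by
    rw [List.ofFn_add]
    simp [Fin.append_left, Fin.append_right]
  rw [ExteriorAlgebra.ιMulti_apply, ExteriorAlgebra.ιMulti_apply, ExteriorAlgebra.ιMulti_apply,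
    h, List.prod_append]

lemma iMulti_cast {p q : ℕ} (h : p = q) (a : Fin q → V) :
    ExteriorAlgebra.ιMulti F q a = ExteriorAlgebra.ιMulti F p (a ∘ Fin.cast h) := by
  rw [ExteriorAlgebra.ιMulti_apply, ExteriorAlgebra.ιMulti_apply]
  congr 1
  rw [List.ofFn_congr h (fun i => ι F ((a ∘ Fin.cast h) i))]
  congr 1

section Bilin

variable (B : LinearMap.BilinForm F V)

lemma polarize (hsymm : B.IsSymm) (hchar : (2 : F) ≠ 0) (W : Submodule F V)
    (hiso : ∀ w ∈ W, B w w = 0) {a b : V} (ha : a ∈ W) (hb : b ∈ W) : B a b = 0 := by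
  have h := hiso (a + b) (W.add_mem ha hb)
  have hba : B b a = B a b := hsymm.eq b a
  simp only [map_add, LinearMap.add_apply, hiso a ha, hiso b hb, hba] at h
  have h2 : (2 : F) * B a b = 0 := by ring_nf; linear_combination h
  exact (mul_eq_zero.mp h2).resolve_left hchar

lemma indep_of_pairing {ι : Type} [Fintype ι] [DecidableEq ι] (p q : ι → V) (c : ι → F)
    (hc : ∀ i, c i ≠ 0) (h : ∀ i j, B (p i) (q j) = if i = j then c i else 0) :
    LinearIndependent F p := by
  rw [Fintype.linearIndependent_iff]
  intro g hg i
  have h0 : B (∑ j, g j • p j) (q i) = 0 := by rw [hg]; simp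
  rw [map_sum] at h0
  simp only [map_smul, LinearMap.smul_apply, LinearMap.sum_apply, h, smul_eq_mul,
    mul_ite, mul_zero] at h0
  rw [Finset.sum_ite_eq' Finset.univ i (fun j => g j * c j)] at h0
  simp only [Finset.mem_univ, if_true] at h0
  exact (mul_eq_zero.mp h0).resolve_right (hc i)

lemma span_isotropic {ι : Type} [Fintype ι] (p : ι → V) (h : ∀ i j, B (p i) (p j) = 0) :
    ∀ w ∈ Submodule.span F (Set.range p), B w w = 0 := by
  intro w hw
  obtain ⟨c, rfl⟩ := (Finsupp.mem_span_range_iff_exists_finsupp).mp hw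
  rw [Finsupp.sum_fintype _ _ (by simp)]
  rw [map_sum]
  apply Finset.sum_eq_zero
  intro x _
  rw [map_sum, LinearMap.sum_apply]
  apply Finset.sum_eq_zero
  intro i _
  simp [h i x]

lemma sum_mul_delta {n : ℕ} (a : Fin n → F) (j : Fin n) :
    ∑ k, a k * (if k = j then (1:F) else 0) = a j := by
  simp [Finset.sum_ite_eq']

end Bilin

section Adapted

variable {n : ℕ} (B : LinearMap.BilinForm F V)

lemma exists_adapted [FiniteDimensional F V] (hdim : Module.finrank F V = 2 * n)
    (hchar : (2 : F) ≠ 0) (hsymm : B.IsSymm) (hnd : B.Nondegenerate)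
    (u : Fin n → V) (hu : LinearIndependent F u)
    (hiso : ∀ i j, B (u i) (u j) = 0) :
    ∃ f : Fin n → V,
      (∀ i j, B (u i) (f j) = if i = j then 1 else 0) ∧
      (∀ i j, B (f i) (u j) = if i = j then 1 else 0) ∧
      (∀ i j, B (f i) (f j) = 0) ∧
      LinearIndependent F (Sum.elim u f) := by
  classical
  have hs : ∀ a b : V, B a b = B b a := fun a b => hsymm.eq a b
  set ρ : V →ₗ[F] (Fin n → F) := LinearMap.pi (fun i => B (u i)) with hρ
  have hker : LinearMap.ker ρ = B.orthogonal (Submodule.span F (Set.range u)) := by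
    ext y
    simp only [LinearMap.mem_ker, LinearMap.BilinForm.mem_orthogonal_iff]
    constructor
    · intro h m hm
      have h' : ∀ i, (B (u i)) y = 0 := by
        intro i
        have hi := congrFun h i
        simpa only [hρ, LinearMap.pi_apply, Pi.zero_apply] using hi
      refine Submodule.span_induction (fun z hz => ?_) (by show B 0 y = 0; simp) ?_ ?_ hm
      · obtain ⟨i, rfl⟩ := hz
        exact h' i
      · intro a b _ _ ha hb
        show B (a + b) y = 0
        rw [map_add, LinearMap.add_apply, ha, hb, add_zero]
      · intro a z _ hz
        show B (a • z) y = 0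
        rw [map_smul, LinearMap.smul_apply, hz, smul_zero]
    · intro h
      funext i
      have := h (u i) (Submodule.subset_span (Set.mem_range_self i))
      simpa only [hρ, LinearMap.pi_apply, Pi.zero_apply] using this
  have hWrank : Module.finrank F (Submodule.span F (Set.range u)) = n := by
    rw [finrank_span_eq_card hu, Fintype.card_fin]
  have hkerrank : Module.finrank F (LinearMap.ker ρ) = n := by
    rw [hker, LinearMap.BilinForm.finrank_orthogonal hnd, hdim, hWrank]
    omega
  have hsurj : LinearMap.range ρ = ⊤ := by
    have h1 := LinearMap.finrank_range_add_finrank_ker ρ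
    rw [hdim, hkerrank] at h1
    apply Submodule.eq_top_of_finrank_eq
    have h2 : Module.finrank F (Fin n → F) = n := by simp
    omega
  have hgex : ∀ j : Fin n, ∃ gg : V, ∀ i, B (u i) gg = if i = j then 1 else 0 := by
    intro j
    have hmem : (Pi.single j 1 : Fin n → F) ∈ LinearMap.range ρ := by
      rw [hsurj]; trivial
    obtain ⟨gg, hgj⟩ := hmem
    refine ⟨gg, fun i => ?_⟩
    have hi := congrFun hgj i
    simp only [hρ, LinearMap.pi_apply] at hi
    rw [hi, Pi.single_apply]
  choose g hgu using hgex
  -- hgu : ∀ j i, B (u i) (g j) = if i = j then 1 else 0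
  set f : Fin n → V := fun j => g j - (2:F)⁻¹ • (∑ k, (B (g j)) (g k) • u k) with hf
  have expand2 : ∀ (y : V) (j), B y (f j)
      = B y (g j) - (2:F)⁻¹ * ∑ k, B (g j) (g k) * B y (u k) := by
    intro y j
    simp only [hf, map_sub, map_smul, map_sum, smul_eq_mul, Finset.mul_sum]
  have expand1 : ∀ (j) (y : V), B (f j) y
      = B (g j) y - (2:F)⁻¹ * ∑ k, B (g j) (g k) * B (u k) y := by
    intro j y
    rw [hs (f j) y, expand2 y j, hs y (g j)]
    congr 2
    apply Finset.sum_congr rfl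
    intro k _
    rw [hs y (u k)]
  have hBuf : ∀ i j, B (u i) (f j) = if i = j then 1 else 0 := by
    intro i j
    rw [expand2 (u i) j, Finset.sum_eq_zero (fun k _ => by rw [hiso i k, mul_zero]),
      mul_zero, sub_zero, hgu j i]
  have hBfu : ∀ i j, B (f i) (u j) = if i = j then 1 else 0 := by
    intro i j
    rw [hs (f i) (u j), hBuf j i]
    by_cases h : i = j <;> simp [h, eq_comm]
  have hBff : ∀ i j, B (f i) (f j) = 0 := by
    intro i j
    rw [expand2 (f i) j]
    have hsum : ∑ k, B (g j) (g k) * B (f i) (u k) = B (g j) (g i) := by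
      rw [Finset.sum_congr rfl (fun k _ => by rw [hBfu i k])]
      simp [Finset.sum_ite_eq]
    rw [hsum, expand1 i (g j)]
    have hsum2 : ∑ k, B (g i) (g k) * B (u k) (g j) = B (g i) (g j) := by
      rw [Finset.sum_congr rfl (fun k _ => by rw [hgu j k])]
      simp [Finset.sum_ite_eq']
    rw [hsum2, hs (g j) (g i)]
    have h2 : (2:F)⁻¹ * 2 = 1 := inv_mul_cancel₀ hchar
    field_simp
    ring
  have hind : LinearIndependent F (Sum.elim u f) := by
    apply indep_of_pairing B (Sum.elim u f) (Sum.elim f u) (fun _ => 1)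
      (fun _ => one_ne_zero)
    rintro (i | i) (j | j)
    · simp only [Sum.elim_inl, hBuf i j]
      by_cases h : i = j <;> simp [h]
    · simp only [Sum.elim_inl, Sum.elim_inr, hiso i j]
      simp
    · simp only [Sum.elim_inl, Sum.elim_inr, hBff i j]
      simp
    · simp only [Sum.elim_inr, hBfu i j]
      by_cases h : i = j <;> simp [h]
  exact ⟨f, hBuf, hBfu, hBff, hind⟩

end Adapted

section Claim

set_option linter.unusedSectionVars false

variable {n : ℕ} [FiniteDimensional F V]

lemma expandEA (b : Module.Basis (Fin n ⊕ Fin n) F V) (v : Fin n → V) :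
    ExteriorAlgebra.ιMulti F n v
      = ∑ m : Fin n → (Fin n ⊕ Fin n), (∏ i, b.repr (v i) (m i)) •
          ExteriorAlgebra.ιMulti F n (fun i => b (m i)) := by
  classical
  have hv : v = fun i => ∑ s, b.repr (v i) s • b s :=
    funext fun i => (b.sum_repr (v i)).symm
  conv_lhs => rw [hv]
  have h1 := MultilinearMap.map_sum
    ((ExteriorAlgebra.ιMulti F n (M := V)).toMultilinearMap)
    (g := fun i s => b.repr (v i) s • b s)
  rw [show ((ExteriorAlgebra.ιMulti F n (M := V)) fun i => ∑ s, b.repr (v i) s • b s)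
      = ((ExteriorAlgebra.ιMulti F n (M := V)).toMultilinearMap fun i => ∑ s, b.repr (v i) s • b s)
    from rfl, h1]
  apply Finset.sum_congr rfl
  intro m _
  exact MultilinearMap.map_smul_univ _ (fun i => b.repr (v i) (m i)) (fun i => b (m i))

lemma expandWedge (b : Module.Basis (Fin n ⊕ Fin n) F V) (v : Fin n → V) :
    wedgeOf F V n v
      = ∑ m : Fin n → (Fin n ⊕ Fin n), (∏ i, b.repr (v i) (m i)) •
          wedgeOf F V n (fun i => b (m i)) := by
  apply Subtype.ext
  rw [wedgeOf_coe]
  rw [expandEA b v]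
  rw [AddSubmonoidClass.coe_finset_sum]
  apply Finset.sum_congr rfl
  intro m _
  rw [SetLike.val_smul, wedgeOf_coe]

lemma claimC (hn : 0 < n) (hdim : Module.finrank F V = 2 * n)
    (B : LinearMap.BilinForm F V)
    (Bk : LinearMap.BilinForm F (⋀[F]^n V))
    (hBk : ∀ (v w : Fin n → V),
      Bk (wedgeOf F V n v) (wedgeOf F V n w) =
        Matrix.det (Matrix.of fun i j => B (v i) (w j)))
    (u fv : Fin n → V)
    (huu : ∀ i j, B (u i) (u j) = 0)
    (hfu : ∀ i j, B (fv i) (u j) = if i = j then 1 else 0)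
    (hind : LinearIndependent F (Sum.elim u fv)) :
    ∀ ζ : ⋀[F]^n V, (ζ : ExteriorAlgebra F V) * ExteriorAlgebra.ιMulti F n u
      = Bk ζ (wedgeOf F V n u) •
          (ExteriorAlgebra.ιMulti F n fv * ExteriorAlgebra.ιMulti F n u) := by
  classical
  haveI : Nonempty (Fin n) := Fin.pos_iff_nonempty.mp hn
  have hcard : Fintype.card (Fin n ⊕ Fin n) = Module.finrank F V := by
    simp only [Fintype.card_sum, Fintype.card_fin, hdim]
    omega
  set b : Module.Basis (Fin n ⊕ Fin n) F V := basisOfLinearIndependentOfCardEqFinrank hind hcard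
    with hbdef
  have hb : ⇑b = Sum.elim u fv := coe_basisOfLinearIndependentOfCardEqFinrank hind hcard
  set τ : ExteriorAlgebra F V :=
    ExteriorAlgebra.ιMulti F n fv * ExteriorAlgebra.ιMulti F n u with hτ
  have key : ∀ m : Fin n → (Fin n ⊕ Fin n),
      ExteriorAlgebra.ιMulti F n (fun i => b (m i)) * ExteriorAlgebra.ιMulti F n u
        = Bk (wedgeOf F V n (fun i => b (m i))) (wedgeOf F V n u) • τ := by
    intro m
    by_cases hex : ∃ p : Fin n × Fin n, m p.1 = Sum.inl p.2
    · obtain ⟨⟨i, i₀⟩, hi⟩ := hex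
      have hval : b (m i) = u i₀ := by rw [hi, hb]; rfl
      have hrow : Bk (wedgeOf F V n (fun i => b (m i))) (wedgeOf F V n u) = 0 := by
        rw [hBk]
        apply Matrix.det_eq_zero_of_row_eq_zero i
        intro j
        simp only [Matrix.of_apply]
        rw [hval, huu]
      rw [hrow, zero_smul, iMulti_mul]
      apply AlternatingMap.map_eq_zero_of_eq _ _
        (i := Fin.castAdd n i) (j := Fin.natAdd n i₀)
      · rw [Fin.append_left, Fin.append_right, hval]
      · intro hcon
        have : (Fin.castAdd n i : ℕ) = (Fin.natAdd n i₀ : ℕ) := congrArg Fin.val hcon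
        simp only [Fin.coe_castAdd, Fin.coe_natAdd] at this
        omega
    · push_neg at hex
      set σ : Fin n → Fin n := fun i => Sum.elim (fun _ => i) id (m i) with hσ
      have hmσ : ∀ i, m i = Sum.inr (σ i) := by
        intro i
        rcases hmi : m i with a | a
        · exact absurd hmi (hex ⟨i, a⟩)
        · simp [hσ, hmi]
      have hbm' : ∀ i, b (m i) = fv (σ i) := by
        intro i
        rw [hmσ i, hb]
        rfl
      have hbm : (fun i => b (m i)) = fun i => fv (σ i) := funext hbm'
      by_cases hinj : Function.Injective σ
      · have hbij : Function.Bijective σ :=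
          (Fintype.bijective_iff_injective_and_card σ).mpr ⟨hinj, rfl⟩
        set π : Equiv.Perm (Fin n) := Equiv.ofBijective σ hbij with hπ
        have hπa : ∀ i, π i = σ i := fun i => rfl
        have hLHS : ExteriorAlgebra.ιMulti F n (fun i => b (m i))
            = Equiv.Perm.sign π • ExteriorAlgebra.ιMulti F n fv := by
          rw [hbm]
          have : (fun i => fv (σ i)) = fv ∘ π := rfl
          rw [this, AlternatingMap.map_perm]
        have hRHS : Bk (wedgeOf F V n (fun i => b (m i))) (wedgeOf F V n u)
            = Matrix.det (π.permMatrix F) := by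
          rw [hBk]
          congr 1
          ext j k
          simp only [Matrix.of_apply, Equiv.Perm.permMatrix, PEquiv.toMatrix_apply,
            Equiv.toPEquiv_apply, Option.mem_some_iff]
          rw [hbm' j, hfu, hπa j]
        rw [hLHS, hRHS, Matrix.det_permutation, smul_mul_assoc]
        rcases Int.units_eq_one_or (Equiv.Perm.sign π) with h1 | h1 <;>
          simp [h1, hτ]
      · obtain ⟨i, j, hσij, hij⟩ := Function.not_injective_iff.mp hinj
        have hz : ExteriorAlgebra.ιMulti F n (fun i => b (m i)) = 0 := by
          apply AlternatingMap.map_eq_zero_of_eq _ _ (i := i) (j := j) _ hij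
          show b (m i) = b (m j)
          rw [hbm' i, hbm' j, hσij]
        rw [hz, zero_mul]
        have hrow : Bk (wedgeOf F V n (fun i => b (m i))) (wedgeOf F V n u) = 0 := by
          rw [hBk]
          apply Matrix.det_zero_of_row_eq hij
          funext k
          show B (b (m i)) (u k) = B (b (m j)) (u k)
          rw [hbm' i, hbm' j, hσij]
        rw [hrow, zero_smul]
  -- now the general statement by span induction
  intro ζ
  have hζ : (ζ : ExteriorAlgebra F V) ∈
      Submodule.span F (Set.range (ExteriorAlgebra.ιMulti F n (M := V))) := by
    rw [ExteriorAlgebra.ιMulti_span_fixedDegree]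
    exact ζ.2
  suffices h : ∀ z, z ∈ Submodule.span F (Set.range (ExteriorAlgebra.ιMulti F n (M := V))) →
      ∀ hz : z ∈ ⋀[F]^n V, z * ExteriorAlgebra.ιMulti F n u
        = Bk ⟨z, hz⟩ (wedgeOf F V n u) • τ by
    exact h ζ hζ ζ.2
  intro z hz
  induction hz using Submodule.span_induction with
  | mem z hzmem =>
      obtain ⟨v, rfl⟩ := hzmem
      intro hz'
      have hwz : (⟨ExteriorAlgebra.ιMulti F n v, hz'⟩ : ⋀[F]^n V) = wedgeOf F V n v := rfl
      rw [hwz, expandEA b v, Finset.sum_mul]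
      rw [expandWedge b v, map_sum, LinearMap.sum_apply, Finset.sum_smul]
      apply Finset.sum_congr rfl
      intro m _
      rw [smul_mul_assoc, key m, map_smul, LinearMap.smul_apply]
      rw [smul_smul]
      rfl
  | zero =>
      intro hz'
      have h0 : (⟨(0 : ExteriorAlgebra F V), hz'⟩ : ⋀[F]^n V) = 0 := rfl
      rw [h0, zero_mul, map_zero, LinearMap.zero_apply, zero_smul]
  | add z1 z2 hz1 hz2 ih1 ih2 =>
      intro hz'
      have m1 : z1 ∈ ⋀[F]^n V := by
        rw [← ExteriorAlgebra.ιMulti_span_fixedDegree]; exact hz1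
      have m2 : z2 ∈ ⋀[F]^n V := by
        rw [← ExteriorAlgebra.ιMulti_span_fixedDegree]; exact hz2
      have hsplit : (⟨z1 + z2, hz'⟩ : ⋀[F]^n V) = ⟨z1, m1⟩ + ⟨z2, m2⟩ := rfl
      rw [hsplit, add_mul, ih1 m1, ih2 m2, map_add, LinearMap.add_apply, add_smul]
  | smul a z1 hz1 ih =>
      intro hz'
      have m1 : z1 ∈ ⋀[F]^n V := by
        rw [← ExteriorAlgebra.ιMulti_span_fixedDegree]; exact hz1
      have hsplit : (⟨a • z1, hz'⟩ : ⋀[F]^n V) = a • ⟨z1, m1⟩ := rfl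
      rw [hsplit, smul_mul_assoc, ih m1, map_smul, LinearMap.smul_apply, smul_smul]
      rfl

end Claim

section Tau

variable {n : ℕ}

lemma tau_ne_zero (B : LinearMap.BilinForm F V)
    (Bk2 : LinearMap.BilinForm F (⋀[F]^(2*n) V))
    (hBk2 : ∀ (v w : Fin (2*n) → V),
      Bk2 (wedgeOf F V (2*n) v) (wedgeOf F V (2*n) w) =
        Matrix.det (Matrix.of fun i j => B (v i) (w j)))
    (u fv : Fin n → V)
    (huu : ∀ i j, B (u i) (u j) = 0)
    (huf : ∀ i j, B (u i) (fv j) = if i = j then 1 else 0)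
    (hfu : ∀ i j, B (fv i) (u j) = if i = j then 1 else 0)
    (hff : ∀ i j, B (fv i) (fv j) = 0) :
    ExteriorAlgebra.ιMulti F n fv * ExteriorAlgebra.ιMulti F n u ≠ 0 := by
  classical
  have h2 : 2 * n = n + n := by omega
  set q : Fin (2*n) → V := (Fin.append fv u) ∘ Fin.cast h2 with hq
  set sw : Fin (n+n) → Fin (n+n) :=
    Fin.addCases (fun a => Fin.natAdd n a) (fun a => Fin.castAdd n a) with hsw
  have hsw_cast : ∀ a : Fin n, sw (Fin.castAdd n a) = Fin.natAdd n a := by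
    intro a; simp [hsw]
  have hsw_nat : ∀ a : Fin n, sw (Fin.natAdd n a) = Fin.castAdd n a := by
    intro a
    show Fin.addCases (fun a => Fin.natAdd n a) (fun a => Fin.castAdd n a) (Fin.natAdd n a)
      = Fin.castAdd n a
    rw [Fin.addCases_right]
  have hswsw : ∀ x, sw (sw x) = x := by
    intro x
    induction x using Fin.addCases with
    | left a => rw [hsw_cast, hsw_nat]
    | right a => rw [hsw_nat, hsw_cast]
  set G' : Matrix (Fin (n+n)) (Fin (n+n)) F :=
    Matrix.of (fun i j => B (Fin.append fv u i) (Fin.append fv u j)) with hG'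
  have happ : ∀ i' j' : Fin (n+n), G' i' j' = if sw i' = j' then 1 else 0 := by
    intro i' j'
    simp only [hG', Matrix.of_apply]
    induction i' using Fin.addCases with
    | left a =>
      rw [hsw_cast]
      induction j' using Fin.addCases with
      | left b =>
        rw [Fin.append_left, Fin.append_left, hff]
        have : ¬ (Fin.natAdd n a = Fin.castAdd n b) := by
          intro hcon
          have := congrArg Fin.val hcon
          simp only [Fin.coe_natAdd, Fin.coe_castAdd] at this
          omega
        rw [if_neg this]
      | right b =>
        rw [Fin.append_left, Fin.append_right, hfu]
        have : (Fin.natAdd n a = Fin.natAdd n b) ↔ a = b := by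
          constructor
          · intro hcon
            have := congrArg Fin.val hcon
            simp only [Fin.coe_natAdd] at this
            exact Fin.ext (by omega)
          · intro hcon; rw [hcon]
        by_cases hab : a = b
        · rw [if_pos hab, if_pos (this.mpr hab)]
        · rw [if_neg hab, if_neg (fun hcon => hab (this.mp hcon))]
    | right a =>
      rw [hsw_nat]
      induction j' using Fin.addCases with
      | left b =>
        rw [Fin.append_right, Fin.append_left, huf]
        have : (Fin.castAdd n a = Fin.castAdd n b) ↔ a = b := by
          constructor
          · intro hcon
            have := congrArg Fin.val hcon
            simp only [Fin.coe_castAdd] at this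
            exact Fin.ext this
          · intro hcon; rw [hcon]
        by_cases hab : a = b
        · rw [if_pos hab, if_pos (this.mpr hab)]
        · rw [if_neg hab, if_neg (fun hcon => hab (this.mp hcon))]
      | right b =>
        rw [Fin.append_right, Fin.append_right, huu]
        have : ¬ (Fin.castAdd n a = Fin.natAdd n b) := by
          intro hcon
          have := congrArg Fin.val hcon
          simp only [Fin.coe_natAdd, Fin.coe_castAdd] at this
          omega
        rw [if_neg this]
  have hGG : G' * G' = 1 := by
    ext i k
    rw [Matrix.mul_apply]
    rw [Finset.sum_congr rfl (fun j _ => by rw [happ i j, ite_mul, one_mul, zero_mul])]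
    rw [Finset.sum_ite_eq Finset.univ (sw i) (fun j => G' j k)]
    simp only [Finset.mem_univ, if_true]
    rw [happ (sw i) k, hswsw i, Matrix.one_apply]
  have hdet2 : Matrix.det G' * Matrix.det G' = 1 := by
    rw [← Matrix.det_mul, hGG, Matrix.det_one]
  intro hcon
  have hτw : wedgeOf F V (2*n) q = 0 := by
    apply Subtype.ext
    rw [wedgeOf_coe]
    show ExteriorAlgebra.ιMulti F (2*n) q = 0
    rw [hq, ← iMulti_cast h2 (Fin.append fv u), ← iMulti_mul]
    exact hcon
  have hBq := hBk2 q q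
  rw [hτw] at hBq
  simp only [map_zero, LinearMap.zero_apply] at hBq
  -- hBq : 0 = det (of fun i j => B (q i) (q j))
  have hsub : (Matrix.of fun i j => B (q i) (q j))
      = G'.submatrix (finCongr h2) (finCongr h2) := rfl
  rw [hsub, Matrix.det_submatrix_equiv_self] at hBq
  rw [← hBq, zero_mul] at hdet2
  exact zero_ne_one hdet2

end Tau

section Ext

set_option linter.unusedSectionVars false

variable {n : ℕ} [FiniteDimensional F V]

lemma ext_vanish (hn : 0 < n)
    (Bx : (⋀[F]^n V) →ₗ[F] F)
    (W : Submodule F V) (hW : Module.finrank F W = n)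
    (u : Fin n → V) (hu : ∀ i, u i ∈ W) (hindep : LinearIndependent F u)
    (h0 : Bx (wedgeOf F V n u) = 0) :
    ∀ p : Fin n → V, (∀ i, p i ∈ W) → Bx (wedgeOf F V n p) = 0 := by
  classical
  haveI : Nonempty (Fin n) := Fin.pos_iff_nonempty.mp hn
  set u' : Fin n → W := fun i => ⟨u i, hu i⟩ with hu'
  have hindep' : LinearIndependent F u' := hindep.of_comp W.subtype
  have hcard : Fintype.card (Fin n) = Module.finrank F W := by simp [hW]
  set bW : Module.Basis (Fin n) F W := basisOfLinearIndependentOfCardEqFinrank hindep' hcard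
    with hbWdef
  have hbW : ⇑bW = u' := coe_basisOfLinearIndependentOfCardEqFinrank _ _
  set ιW : W [⋀^Fin n]→ₗ[F] (⋀[F]^n V) :=
    AlternatingMap.codRestrict ((ExteriorAlgebra.ιMulti F n).compLinearMap W.subtype)
      (⋀[F]^n V) (fun v => ExteriorAlgebra.ιMulti_range F n (Set.mem_range_self _)) with hιW
  set g : W [⋀^Fin n]→ₗ[F] F := Bx.compAlternatingMap ιW with hg
  have hgw : ∀ (p : Fin n → V) (hp : ∀ i, p i ∈ W),
      g (fun i => ⟨p i, hp i⟩) = Bx (wedgeOf F V n p) := fun p hp => rfl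
  have hgdet := g.eq_smul_basis_det bW
  have hgb : g ⇑bW = 0 := by
    rw [hbW]
    have := hgw u hu
    rw [show (fun i => (⟨u i, hu i⟩ : W)) = u' from rfl] at this
    rw [this, h0]
  intro p hp
  rw [← hgw p hp]
  rw [hgdet]
  simp only [AlternatingMap.smul_apply, hgb, smul_eq_mul, zero_mul]

end Ext

section Branch

set_option linter.unusedSectionVars false

variable {n : ℕ} [FiniteDimensional F V]

lemma branch_vanish (hn : 0 < n) (hdim : Module.finrank F V = 2 * n)
    (B : LinearMap.BilinForm F V)
    (Bkn : LinearMap.BilinForm F (⋀[F]^n V))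
    (hBkn : ∀ (v w : Fin n → V),
      Bkn (wedgeOf F V n v) (wedgeOf F V n w) =
        Matrix.det (Matrix.of fun i j => B (v i) (w j)))
    (vol : ⋀[F]^(2*n) V)
    (star : (⋀[F]^n V) →ₗ[F] (⋀[F]^n V))
    (hstar : ∀ x y : ⋀[F]^n V,
      ((star x : ExteriorAlgebra F V) * (y : ExteriorAlgebra F V)) =
        (Bkn x y) • (vol : ExteriorAlgebra F V))
    (W : Submodule F V) (hW : Module.finrank F W = n)
    (u fv : Fin n → V) (hu : ∀ i, u i ∈ W) (hindep : LinearIndependent F u)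
    (huu : ∀ i j, B (u i) (u j) = 0)
    (hfu : ∀ i j, B (fv i) (u j) = if i = j then 1 else 0)
    (hind : LinearIndependent F (Sum.elim u fv))
    (ε : F)
    (hvτ : (vol : ExteriorAlgebra F V)
      ≠ ε • (ExteriorAlgebra.ιMulti F n fv * ExteriorAlgebra.ιMulti F n u))
    (x : ⋀[F]^n V) (hx : star x = ε • x) :
    ∀ p : Fin n → V, (∀ i, p i ∈ W) → Bkn x (wedgeOf F V n p) = 0 := by
  set τ := ExteriorAlgebra.ιMulti F n fv * ExteriorAlgebra.ιMulti F n u with hτ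
  have hC := claimC hn hdim B Bkn hBkn u fv huu hfu hind x
  have hS := hstar x (wedgeOf F V n u)
  rw [hx] at hS
  have hcoe : ((ε • x : ⋀[F]^n V) : ExteriorAlgebra F V)
      = ε • (x : ExteriorAlgebra F V) := rfl
  rw [hcoe, wedgeOf_coe, smul_mul_assoc, hC] at hS
  have h0 : Bkn x (wedgeOf F V n u) • ((vol : ExteriorAlgebra F V) - ε • τ) = 0 := by
    rw [smul_sub, ← hS, smul_comm]
    exact sub_self _
  intro p hp
  rcases smul_eq_zero.mp h0 with h | h
  · exact ext_vanish hn (Bkn x) W hW u hu hindep h p hp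
  · exact absurd (sub_eq_zero.mp h) hvτ

lemma dichotomy (hn : 0 < n) (hdim : Module.finrank F V = 2 * n) (hchar : (2:F) ≠ 0)
    (B : LinearMap.BilinForm F V) (hsymm : B.IsSymm) (hnd : B.Nondegenerate)
    (Bkn : LinearMap.BilinForm F (⋀[F]^n V))
    (hBkn : ∀ (v w : Fin n → V),
      Bkn (wedgeOf F V n v) (wedgeOf F V n w) =
        Matrix.det (Matrix.of fun i j => B (v i) (w j)))
    (Bk2 : LinearMap.BilinForm F (⋀[F]^(2*n) V))
    (hBk2 : ∀ (v w : Fin (2*n) → V),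
      Bk2 (wedgeOf F V (2*n) v) (wedgeOf F V (2*n) w) =
        Matrix.det (Matrix.of fun i j => B (v i) (w j)))
    (vol : ⋀[F]^(2*n) V)
    (star : (⋀[F]^n V) →ₗ[F] (⋀[F]^n V))
    (hstar : ∀ x y : ⋀[F]^n V,
      ((star x : ExteriorAlgebra F V) * (y : ExteriorAlgebra F V)) =
        (Bkn x y) • (vol : ExteriorAlgebra F V))
    (W : Submodule F V) (hWn : Module.finrank F W = n) (hWiso : ∀ w ∈ W, B w w = 0)
    (hnotS : ¬ ∀ x : ⋀[F]^n V, star x = x → ∀ p : Fin n → V, (∀ i, p i ∈ W) →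
        Bkn x (wedgeOf F V n p) = 0) :
    ∀ x : ⋀[F]^n V, star x = -x → ∀ p : Fin n → V, (∀ i, p i ∈ W) →
        Bkn x (wedgeOf F V n p) = 0 := by
  push_neg at hnotS
  obtain ⟨y, hy, p, hp, hne⟩ := hnotS
  have hpind : LinearIndependent F p := by
    by_contra hdep
    apply hne
    have hz : ExteriorAlgebra.ιMulti F n p = 0 :=
      (ExteriorAlgebra.ιMulti F n).map_linearDependent p hdep
    have hw0 : wedgeOf F V n p = 0 := Subtype.ext (by rw [wedgeOf_coe, hz]; rfl)
    rw [hw0, map_zero]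
  have hpair : ∀ i j, B (p i) (p j) = 0 := fun i j =>
    polarize B hsymm hchar W hWiso (hp i) (hp j)
  obtain ⟨fv, huf, hfu, hff, hind⟩ := exists_adapted B hdim hchar hsymm hnd p hpind hpair
  set τ := ExteriorAlgebra.ιMulti F n fv * ExteriorAlgebra.ιMulti F n p with hτ
  have hτ0 : τ ≠ 0 := tau_ne_zero B Bk2 hBk2 p fv hpair huf hfu hff
  have hvol1 : (vol : ExteriorAlgebra F V) = (1:F) • τ := by
    by_contra hvv
    exact hne (branch_vanish hn hdim B Bkn hBkn vol star hstar W hWn p fv hp hpind hpair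
      hfu hind 1 hvv y (by rw [hy, one_smul]) p hp)
  have hvolm : (vol : ExteriorAlgebra F V) ≠ (-1:F) • τ := by
    intro hvv
    rw [hvol1, one_smul] at hvv
    have h2τ : (2:F) • τ = 0 := by
      rw [two_smul]
      nth_rewrite 1 [hvv]
      simp
    exact hτ0 ((smul_eq_zero.mp h2τ).resolve_left hchar)
  intro x hx p' hp'
  exact branch_vanish hn hdim B Bkn hBkn vol star hstar W hWn p fv hp hpind hpair
    hfu hind (-1) hvolm x (by rw [hx, ← neg_one_smul F x]) p' hp'

end Branch

section Planes

set_option linter.unusedSectionVars false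

variable {n : ℕ} [FiniteDimensional F V]

lemma tau_swap (hn : 0 < n) (u fv : Fin n → V) :
    ExteriorAlgebra.ιMulti F n (Function.update fv ⟨0, hn⟩ (u ⟨0, hn⟩)) *
      ExteriorAlgebra.ιMulti F n (Function.update u ⟨0, hn⟩ (fv ⟨0, hn⟩))
    = - (ExteriorAlgebra.ιMulti F n fv * ExteriorAlgebra.ιMulti F n u) := by
  classical
  set i0 : Fin n := ⟨0, hn⟩ with hi0
  have hi0v : (i0 : ℕ) = 0 := rfl
  rw [iMulti_mul, iMulti_mul]
  have hne : (Fin.castAdd n i0 : Fin (n+n)) ≠ Fin.natAdd n i0 := by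
    intro hc
    have := congrArg Fin.val hc
    simp only [Fin.coe_castAdd, Fin.coe_natAdd, hi0v] at this
    omega
  have hfam : Fin.append (Function.update fv i0 (u i0)) (Function.update u i0 (fv i0))
      = (Fin.append fv u) ∘ (Equiv.swap (Fin.castAdd n i0) (Fin.natAdd n i0)) := by
    funext j
    induction j using Fin.addCases with
    | left a =>
      by_cases ha : a = i0
      · subst ha
        rw [Function.comp_apply, Equiv.swap_apply_left, Fin.append_left, Fin.append_right,
          Function.update_self]
      · have h1 : Fin.castAdd n a ≠ Fin.castAdd n i0 := by
          intro hc
          exact ha (by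
            have := congrArg Fin.val hc
            simp only [Fin.coe_castAdd] at this
            exact Fin.ext this)
        have h2 : Fin.castAdd n a ≠ Fin.natAdd n i0 := by
          intro hc
          have := congrArg Fin.val hc
          simp only [Fin.coe_castAdd, Fin.coe_natAdd, hi0v] at this
          omega
        rw [Function.comp_apply, Equiv.swap_apply_of_ne_of_ne h1 h2, Fin.append_left,
          Fin.append_left, Function.update_of_ne ha]
    | right a =>
      by_cases ha : a = i0
      · subst ha
        rw [Function.comp_apply, Equiv.swap_apply_right, Fin.append_right, Fin.append_left,
          Function.update_self]
      · have h1 : Fin.natAdd n a ≠ Fin.castAdd n i0 := by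
          intro hc
          have := congrArg Fin.val hc
          simp only [Fin.coe_castAdd, Fin.coe_natAdd, hi0v] at this
          omega
        have h2 : Fin.natAdd n a ≠ Fin.natAdd n i0 := by
          intro hc
          exact ha (by
            have := congrArg Fin.val hc
            simp only [Fin.coe_natAdd] at this
            exact Fin.ext (by omega))
        rw [Function.comp_apply, Equiv.swap_apply_of_ne_of_ne h1 h2, Fin.append_right,
          Fin.append_right, Function.update_of_ne ha]
  rw [hfam]
  rw [AlternatingMap.map_perm (ExteriorAlgebra.ιMulti F (n+n)) (Fin.append fv u)
    (Equiv.swap (Fin.castAdd n i0) (Fin.natAdd n i0))]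
  rw [Equiv.Perm.sign_swap hne]
  simp [Units.smul_def]

lemma update_gram (B : LinearMap.BilinForm F V) (hn : 0 < n) (u fv : Fin n → V)
    (huu : ∀ i j, B (u i) (u j) = 0)
    (huf : ∀ i j, B (u i) (fv j) = if i = j then 1 else 0)
    (hfu : ∀ i j, B (fv i) (u j) = if i = j then 1 else 0)
    (hff : ∀ i j, B (fv i) (fv j) = 0) :
    (∀ i j, B (Function.update u ⟨0, hn⟩ (fv ⟨0, hn⟩) i)
        (Function.update u ⟨0, hn⟩ (fv ⟨0, hn⟩) j) = 0) ∧
    (∀ i j, B (Function.update u ⟨0, hn⟩ (fv ⟨0, hn⟩) i)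
        (Function.update fv ⟨0, hn⟩ (u ⟨0, hn⟩) j) = if i = j then 1 else 0) ∧
    (∀ i j, B (Function.update fv ⟨0, hn⟩ (u ⟨0, hn⟩) i)
        (Function.update u ⟨0, hn⟩ (fv ⟨0, hn⟩) j) = if i = j then 1 else 0) ∧
    (∀ i j, B (Function.update fv ⟨0, hn⟩ (u ⟨0, hn⟩) i)
        (Function.update fv ⟨0, hn⟩ (u ⟨0, hn⟩) j) = 0) := by
  classical
  set i0 : Fin n := ⟨0, hn⟩ with hi0
  refine ⟨?_, ?_, ?_, ?_⟩ <;> intro i j <;>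
    by_cases hi : i = i0 <;> by_cases hj : j = i0 <;>
    simp [Function.update_apply, hi, hj, huu, huf, hfu, hff, Ne.symm]

lemma elim_indep (B : LinearMap.BilinForm F V) (u fv : Fin n → V)
    (huf : ∀ i j, B (u i) (fv j) = if i = j then 1 else 0)
    (hfu : ∀ i j, B (fv i) (u j) = if i = j then 1 else 0)
    (huu : ∀ i j, B (u i) (u j) = 0)
    (hff : ∀ i j, B (fv i) (fv j) = 0) :
    LinearIndependent F (Sum.elim u fv) := by
  classical
  apply indep_of_pairing B (Sum.elim u fv) (Sum.elim fv u) (fun _ => 1)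
    (fun _ => one_ne_zero)
  rintro (i | i) (j | j)
  · simp only [Sum.elim_inl, huf i j]
    by_cases h : i = j <;> simp [h]
  · simp only [Sum.elim_inl, Sum.elim_inr, huu i j]
    simp
  · simp only [Sum.elim_inl, Sum.elim_inr, hff i j]
    simp
  · simp only [Sum.elim_inr, hfu i j]
    by_cases h : i = j <;> simp [h]

lemma exists_hyperbolic [IsAlgClosed F] (hdim : Module.finrank F V = 2 * n)
    (hchar : (2:F) ≠ 0) (B : LinearMap.BilinForm F V)
    (hsymm : B.IsSymm) (hnd : B.Nondegenerate) :
    ∃ u : Fin n → V, LinearIndependent F u ∧ (∀ i j, B (u i) (u j) = 0) := by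
  classical
  haveI : Invertible (2 : F) := invertibleOfNonzero hchar
  obtain ⟨o0, ho0⟩ := LinearMap.BilinForm.exists_orthogonal_basis (LinearMap.BilinForm.isSymm_iff.mp hsymm)
  set o : Module.Basis (Fin (2*n)) F V := o0.reindex (finCongr hdim) with ho
  have hortho : ∀ i j, i ≠ j → B (o i) (o j) = 0 := by
    intro i j hij
    rw [ho, Module.Basis.reindex_apply, Module.Basis.reindex_apply]
    apply ho0
    intro hc
    exact hij (by
      have := congrArg (finCongr hdim) hc
      simpa using this)
  have ha : ∀ i, B (o i) (o i) ≠ 0 := by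
    intro i hzero
    have hall : ∀ z, B (o i) z = 0 := by
      intro z
      have hz : z = ∑ s, o.repr z s • o s := (o.sum_repr z).symm
      rw [hz, map_sum]
      apply Finset.sum_eq_zero
      intro s _
      rw [map_smul, smul_eq_mul]
      by_cases hs : i = s
      · rw [← hs, hzero, mul_zero]
      · rw [hortho i s hs, mul_zero]
    exact o.ne_zero i (hnd.1 (o i) hall)
  have hr : ∀ i : Fin (2*n), ∃ rr : F, rr ^ 2 = B (o i) (o i) := fun i =>
    IsAlgClosed.exists_pow_nat_eq _ two_pos
  choose r hrsq using hr
  have hrne : ∀ i, r i ≠ 0 := by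
    intro i hz
    exact ha i (by rw [← hrsq i, hz]; ring)
  set c : Fin (2*n) → V := fun i => (r i)⁻¹ • o i with hcdef
  have hc : ∀ i j, B (c i) (c j) = if i = j then 1 else 0 := by
    intro i j
    simp only [hcdef, map_smul, LinearMap.smul_apply, smul_eq_mul]
    by_cases hij : i = j
    · subst hij
      rw [if_pos rfl, ← hrsq i]
      field_simp [hrne i]
    · rw [if_neg hij, hortho i j hij]
      ring
  obtain ⟨μ, hμ⟩ : ∃ μ : F, μ ^ 2 = -1 := IsAlgClosed.exists_pow_nat_eq _ two_pos
  have h2 : 2*n = n+n := by omega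
  set i1 : Fin n → Fin (2*n) := fun j => Fin.cast h2.symm (Fin.castAdd n j) with hi1
  set i2 : Fin n → Fin (2*n) := fun j => Fin.cast h2.symm (Fin.natAdd n j) with hi2
  have hi1i1 : ∀ j k : Fin n, (i1 j = i1 k) ↔ j = k := by
    intro j k
    constructor
    · intro hc'
      have := congrArg Fin.val hc'
      simp only [hi1, Fin.coe_cast, Fin.coe_castAdd] at this
      exact Fin.ext this
    · intro hc'; rw [hc']
  have hi2i2 : ∀ j k : Fin n, (i2 j = i2 k) ↔ j = k := by
    intro j k
    constructor
    · intro hc'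
      have := congrArg Fin.val hc'
      simp only [hi2, Fin.coe_cast, Fin.coe_natAdd] at this
      exact Fin.ext (by omega)
    · intro hc'; rw [hc']
  have hi1i2 : ∀ j k : Fin n, i1 j ≠ i2 k := by
    intro j k hc'
    have := congrArg Fin.val hc'
    simp only [hi1, hi2, Fin.coe_cast, Fin.coe_castAdd, Fin.coe_natAdd] at this
    have hj := (i1 j).isLt
    omega
  have hi2i1 : ∀ j k : Fin n, i2 j ≠ i1 k := fun j k hc' => hi1i2 k j hc'.symm
  have hv11 : ∀ j k, B (c (i1 j)) (c (i1 k)) = if j = k then 1 else 0 := by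
    intro j k
    rw [hc]
    by_cases h : j = k
    · rw [if_pos h, if_pos (by rw [h])]
    · rw [if_neg h, if_neg (fun hc' => h ((hi1i1 j k).mp hc'))]
  have hv22 : ∀ j k, B (c (i2 j)) (c (i2 k)) = if j = k then 1 else 0 := by
    intro j k
    rw [hc]
    by_cases h : j = k
    · rw [if_pos h, if_pos (by rw [h])]
    · rw [if_neg h, if_neg (fun hc' => h ((hi2i2 j k).mp hc'))]
  have hv12 : ∀ j k, B (c (i1 j)) (c (i2 k)) = 0 := by
    intro j k
    rw [hc, if_neg (hi1i2 j k)]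
  have hv21 : ∀ j k, B (c (i2 j)) (c (i1 k)) = 0 := by
    intro j k
    rw [hc, if_neg (hi2i1 j k)]
  set e : Fin n → V := fun j => c (i1 j) + μ • c (i2 j) with he
  set eb : Fin n → V := fun j => c (i1 j) - μ • c (i2 j) with heb
  have hee : ∀ j k, B (e j) (e k) = 0 := by
    intro j k
    simp only [he, map_add, map_smul, LinearMap.add_apply, LinearMap.smul_apply,
      smul_eq_mul, hv11, hv22, hv12, hv21]
    by_cases hjk : j = k <;> simp [hjk] <;> linear_combination hμ
  have heeb : ∀ j k, B (e j) (eb k) = if j = k then 2 else 0 := by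
    intro j k
    simp only [he, heb, map_add, map_sub, map_smul, LinearMap.add_apply,
      LinearMap.sub_apply, LinearMap.smul_apply, smul_eq_mul, hv11, hv22, hv12, hv21]
    by_cases hjk : j = k <;> simp [hjk] <;> linear_combination -hμ
  have hind : LinearIndependent F e := by
    apply indep_of_pairing B e eb (fun _ => 2) (fun _ => hchar)
    intro j k
    rw [heeb j k]
  exact ⟨e, hind, hee⟩

end Planes

end SDHelp

/-- Lemma 1 of the paper: `F` algebraically closed of
characteristic ≠ 2, `V` a `2n`-dimensional quadratic space with non-degenerate
(symmetric bilinear) form `B`, induced forms `Bk` on the exterior powers, volume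
form `vol` and star operator `∗` on `⋀^n V` as before.  Via the identification
of `Λⁿ V*` with `Λⁿ V` given by the non-degenerate form, the restriction of an
`n`-form `x` to a subspace `W` vanishes iff `⟨x, w₁ ∧ ... ∧ w_n⟩_Q = 0` for all
`w_i ∈ W`.  The claim: the `n`-dimensional totally isotropic subspaces of `Q`
split into two families (`α`-planes, `P W = true`, and `β`-planes,
`P W = false`) such that every antiselfdual form (`∗x = −x`) restricts to zero
on every isotropic subspace of the first family, and every selfdual form
(`∗x = x`) restricts to zero on every isotropic subspace of the other family;
moreover both families are nonempty. -/
theorem selfdual_forms_vanish_on_isotropic_family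
    (n : ℕ) (hn : 0 < n) [IsAlgClosed F]
    [FiniteDimensional F V] (hdim : Module.finrank F V = 2 * n)
    (hchar : (2 : F) ≠ 0)
    (B : LinearMap.BilinForm F V) (hsymm : B.IsSymm) (hnd : B.Nondegenerate)
    (Bk : ∀ k : ℕ, LinearMap.BilinForm F (⋀[F]^k V))
    (hBk : ∀ (k : ℕ) (v w : Fin k → V),
      Bk k (wedgeOf F V k v) (wedgeOf F V k w) =
        Matrix.det (Matrix.of fun i j => B (v i) (w j)))
    (vol : ⋀[F]^(2 * n) V) (hvol : Bk (2 * n) vol vol = 1)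
    (star : (⋀[F]^n V) →ₗ[F] (⋀[F]^n V))
    (hstar : ∀ x y : ⋀[F]^n V,
      ((star x : ExteriorAlgebra F V) * (y : ExteriorAlgebra F V)) =
        (Bk n x y) • (vol : ExteriorAlgebra F V)) :
    ∃ P : Submodule F V → Bool,
      (∃ W : Submodule F V, Module.finrank F W = n ∧ (∀ w ∈ W, B w w = 0) ∧ P W = true) ∧
      (∃ W : Submodule F V, Module.finrank F W = n ∧ (∀ w ∈ W, B w w = 0) ∧ P W = false) ∧
      ∀ W : Submodule F V, Module.finrank F W = n → (∀ w ∈ W, B w w = 0) →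
        ∀ x : ⋀[F]^n V,
          ((P W = true → star x = -x → ∀ v : Fin n → V, (∀ i, v i ∈ W) →
              Bk n x (wedgeOf F V n v) = 0) ∧
           (P W = false → star x = x → ∀ v : Fin n → V, (∀ i, v i ∈ W) →
              Bk n x (wedgeOf F V n v) = 0)) := by

  classical
  obtain ⟨u, huind, huu⟩ := SDHelp.exists_hyperbolic hdim hchar B hsymm hnd
  obtain ⟨fv, huf, hfu, hff, hind⟩ := SDHelp.exists_adapted B hdim hchar hsymm hnd u huind huu
  obtain ⟨huu', huf', hfu', hff'⟩ := SDHelp.update_gram B hn u fv huu huf hfu hff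
  set i0 : Fin n := ⟨0, hn⟩ with hi0
  set u' : Fin n → V := Function.update u i0 (fv i0) with hu'
  set fv' : Fin n → V := Function.update fv i0 (u i0) with hfv'
  have hind' : LinearIndependent F (Sum.elim u' fv') :=
    SDHelp.elim_indep B u' fv' huf' hfu' huu' hff'
  have hu'ind : LinearIndependent F u' := by
    have := hind'.comp Sum.inl Sum.inl_injective
    rwa [Sum.elim_comp_inl] at this
  set W1 : Submodule F V := Submodule.span F (Set.range u) with hW1
  set W2 : Submodule F V := Submodule.span F (Set.range u') with hW2
  have hW1n : Module.finrank F W1 = n := by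
    rw [hW1, finrank_span_eq_card huind, Fintype.card_fin]
  have hW2n : Module.finrank F W2 = n := by
    rw [hW2, finrank_span_eq_card hu'ind, Fintype.card_fin]
  have hW1iso : ∀ w ∈ W1, B w w = 0 := SDHelp.span_isotropic B u huu
  have hW2iso : ∀ w ∈ W2, B w w = 0 := SDHelp.span_isotropic B u' huu'
  have hmem1 : ∀ i, u i ∈ W1 := fun i => Submodule.subset_span ⟨i, rfl⟩
  have hmem2 : ∀ i, u' i ∈ W2 := fun i => Submodule.subset_span ⟨i, rfl⟩
  set τ1 := ExteriorAlgebra.ιMulti F n fv * ExteriorAlgebra.ιMulti F n u with hτ1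
  set τ2 := ExteriorAlgebra.ιMulti F n fv' * ExteriorAlgebra.ιMulti F n u' with hτ2
  have hτswap : τ2 = -τ1 := SDHelp.tau_swap hn u fv
  have hτ1ne : τ1 ≠ 0 := SDHelp.tau_ne_zero B (Bk (2*n)) (hBk (2*n)) u fv huu huf hfu hff
  have hτneτ : ((-1:F) • τ1 : ExteriorAlgebra F V) ≠ (1:F) • τ1 := by
    intro hcc
    rw [one_smul, neg_one_smul] at hcc
    have h2τ : (2:F) • τ1 = 0 := by
      rw [two_smul]
      nth_rewrite 1 [← hcc]
      simp
    exact hτ1ne ((smul_eq_zero.mp h2τ).resolve_left hchar)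
  have hsm : ((-1:F) • τ2 : ExteriorAlgebra F V) = (1:F) • τ1 := by
    rw [hτswap, smul_neg, one_smul, neg_one_smul, neg_neg]
  have h1τ2 : ((1:F) • τ2 : ExteriorAlgebra F V) = (-1:F) • τ1 := by
    rw [hτswap, one_smul, neg_one_smul]
  have hW12 : W1 ≠ W2 := by
    intro hcc
    have hfvmem : fv i0 ∈ W2 := by
      have hup : u' i0 = fv i0 := Function.update_self _ _ _
      rw [← hup]; exact hmem2 i0
    rw [← hcc] at hfvmem
    have hpz := SDHelp.polarize B hsymm hchar W1 hW1iso (hmem1 i0) hfvmem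
    rw [huf i0 i0] at hpz
    simp at hpz
  have hA1 : (vol : ExteriorAlgebra F V) ≠ (-1:F) • τ1 →
      ∀ x : ⋀[F]^n V, star x = -x → ∀ p : Fin n → V, (∀ i, p i ∈ W1) →
        Bk n x (wedgeOf F V n p) = 0 := fun hv x hx =>
    SDHelp.branch_vanish hn hdim B (Bk n) (hBk n) vol star hstar W1 hW1n u fv hmem1
      huind huu hfu hind (-1) hv x (by rw [hx]; exact (neg_one_smul F x).symm)
  have hS1 : (vol : ExteriorAlgebra F V) ≠ (1:F) • τ1 →
      ∀ x : ⋀[F]^n V, star x = x → ∀ p : Fin n → V, (∀ i, p i ∈ W1) →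
        Bk n x (wedgeOf F V n p) = 0 := fun hv x hx =>
    SDHelp.branch_vanish hn hdim B (Bk n) (hBk n) vol star hstar W1 hW1n u fv hmem1
      huind huu hfu hind 1 hv x (by rw [hx]; exact (one_smul F x).symm)
  have hA2 : (vol : ExteriorAlgebra F V) ≠ (-1:F) • τ2 →
      ∀ x : ⋀[F]^n V, star x = -x → ∀ p : Fin n → V, (∀ i, p i ∈ W2) →
        Bk n x (wedgeOf F V n p) = 0 := fun hv x hx =>
    SDHelp.branch_vanish hn hdim B (Bk n) (hBk n) vol star hstar W2 hW2n u' fv' hmem2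
      hu'ind huu' hfu' hind' (-1) hv x (by rw [hx]; exact (neg_one_smul F x).symm)
  have hS2 : (vol : ExteriorAlgebra F V) ≠ (1:F) • τ2 →
      ∀ x : ⋀[F]^n V, star x = x → ∀ p : Fin n → V, (∀ i, p i ∈ W2) →
        Bk n x (wedgeOf F V n p) = 0 := fun hv x hx =>
    SDHelp.branch_vanish hn hdim B (Bk n) (hBk n) vol star hstar W2 hW2n u' fv' hmem2
      hu'ind huu' hfu' hind' 1 hv x (by rw [hx]; exact (one_smul F x).symm)
  obtain ⟨Wp, Wm, hWpn, hWpiso, hWmn, hWmiso, hWmp, hAp, hSm⟩ :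
      ∃ Wp Wm : Submodule F V, Module.finrank F Wp = n ∧ (∀ w ∈ Wp, B w w = 0) ∧
        Module.finrank F Wm = n ∧ (∀ w ∈ Wm, B w w = 0) ∧ Wm ≠ Wp ∧
        (∀ x : ⋀[F]^n V, star x = -x → ∀ p : Fin n → V, (∀ i, p i ∈ Wp) →
            Bk n x (wedgeOf F V n p) = 0) ∧
        (∀ x : ⋀[F]^n V, star x = x → ∀ p : Fin n → V, (∀ i, p i ∈ Wm) →
            Bk n x (wedgeOf F V n p) = 0) := by
    by_cases hvolc : (vol : ExteriorAlgebra F V) = (-1:F) • τ1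
    · refine ⟨W2, W1, hW2n, hW2iso, hW1n, hW1iso, hW12, ?_, ?_⟩
      · apply hA2
        rw [hsm, hvolc]
        exact hτneτ
      · apply hS1
        rw [hvolc]
        exact hτneτ
    · refine ⟨W1, W2, hW1n, hW1iso, hW2n, hW2iso, hW12.symm, hA1 hvolc, ?_⟩
      apply hS2
      rw [h1τ2]
      exact hvolc
  refine ⟨fun W => decide (W = Wp) || !decide (∀ x : ⋀[F]^n V, star x = x →
      ∀ p : Fin n → V, (∀ i, p i ∈ W) → Bk n x (wedgeOf F V n p) = 0),
    ⟨Wp, hWpn, hWpiso, ?_⟩, ⟨Wm, hWmn, hWmiso, ?_⟩, ?_⟩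
  · apply Bool.or_eq_true_iff.mpr
    left
    exact decide_eq_true rfl
  · apply Bool.or_eq_false_iff.mpr
    refine ⟨decide_eq_false hWmp, ?_⟩
    rw [Bool.not_eq_false']
    exact decide_eq_true hSm
  · intro W hWn hWiso x
    constructor
    · intro hPt hx p hp
      rcases Bool.or_eq_true_iff.mp hPt with h | h
      · have hWW : W = Wp := of_decide_eq_true h
        subst hWW
        exact hAp x hx p hp
      · rw [Bool.not_eq_true'] at h
        have hnS := of_decide_eq_false h
        exact SDHelp.dichotomy hn hdim hchar B hsymm hnd (Bk n) (hBk n) (Bk (2*n))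
          (hBk (2*n)) vol star hstar W hWn hWiso hnS x hx p hp
    · intro hPf hx p hp
      rw [Bool.or_eq_false_iff] at hPf
      have h2 := hPf.2
      rw [Bool.not_eq_false'] at h2
      exact (of_decide_eq_true h2) x hx p hp


end
end

section
/- Let A be a 2n−1 dimensional Euclidean affine space over a field F (affine space over a vector space with non-degenerate quadratic form Q and chosen volume form vol_Q). The assignment sending a generator (x₀, ..., x_{2n-1}; vol_Q) of the Euclidean scissor congruence group E_n(F) to (1/(2n−1)!)·⟨(x₁−x₀) ∧ ... ∧ (x_{2n-1}−x₀), vol_Q⟩ respects the defining relations of E_n(F): it vanishes on degenerate simplices (all vertices in a hyperplane), is alternating under permutations of the vertices and under vol_Q ↦ −vol_Q, satisfies the scissor (alternating sum) relation for any 2n+1 points, and is invariant under affine transformations g with the form transported by g. Hence the volume yields a well-defined group homomorphism Vol: E_n(F) → F, which intertwines the dilation action of F* on E_n(F) with the action f * v = f^{2n-1}v on F (i.e., Vol is a homomorphism of F*-modules E_n(F) → F⟨n−1⟩). -/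
noncomputable section

open FreeAbelianGroup

variable (F : Type) [Field F] [CharZero F] (d : ℕ)

/-- A generator of the Euclidean scissor congruence group: a Euclidean simplex
`(x₀, ..., x_d; vol_Q)` in the `d`-dimensional Euclidean affine space `A = Fᵈ`
over the Euclidean vector space `V = Fᵈ` with non-degenerate (symmetric
bilinear) form `B` (the Euclidean structure `Q`), together with a Euclidean
volume form `vol` (an alternating `d`-form with `vol² = det_Q` on every
`d`-tuple of vectors).  The simplex is required to be Euclidean: `B` is
non-degenerate on the direction space of every face. -/
structure EucGen : Type where
  x : Fin (d + 1) → (Fin d → F)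
  B : LinearMap.BilinForm F (Fin d → F)
  symm : B.IsSymm
  nondeg : B.Nondegenerate
  vol : AlternatingMap F (Fin d → F) F (Fin d)
  hvol : ∀ v : Fin d → (Fin d → F),
    (vol v) ^ 2 = Matrix.det (Matrix.of fun i j => B (v i) (v j))
  euclidean : ∀ s : Finset (Fin (d + 1)), s.Nonempty →
    (B.restrict (Submodule.span F
      {v : Fin d → F | ∃ i ∈ s, ∃ j ∈ s, v = x i - x j})).Nondegenerate

variable {F d}

/-- The (normalized) volume of a generating simplex:
`(1/d!)·⟨(x₁−x₀) ∧ ... ∧ (x_d−x₀), vol_Q⟩`. -/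
def vol0 (g : EucGen F d) : F :=
  ((Nat.factorial d : F))⁻¹ * g.vol (fun i : Fin d => g.x i.succ - g.x 0)

/-- The set of defining relations of the Euclidean scissor congruence group
`E_n(F)` inside the free abelian group on the generators: (i) degeneracy,
(ii) skew-symmetry in `vol_Q` and in the vertices, (iii) the scissor axiom,
(iv) affine invariance. -/
def eucRelations : Set (FreeAbelianGroup (EucGen F d)) :=
  -- (i) all vertices in a hyperplane (an affine level set of a nonzero functional)
  {z | ∃ g : EucGen F d, (∃ φ : (Fin d → F) →ₗ[F] F, φ ≠ 0 ∧ ∃ c : F,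
        ∀ i, φ (g.x i) = c) ∧ z = of g} ∪
  -- (ii a) (x; −vol) = −(x; vol)
  {z | ∃ g h : EucGen F d, h.x = g.x ∧ h.B = g.B ∧ h.vol = -g.vol ∧
        z = of h + of g} ∪
  -- (ii b) (x∘σ; vol) = sgn(σ)·(x; vol)
  {z | ∃ g h : EucGen F d, ∃ σ : Equiv.Perm (Fin (d + 1)),
        h.x = g.x ∘ σ ∧ h.B = g.B ∧ h.vol = g.vol ∧
        z = of h - (Equiv.Perm.sign σ : ℤ) • of g} ∪
  -- (iii) scissor axiom: Σᵢ (−1)ⁱ (y₀,...,ŷᵢ,...,y_{d+1}; vol) = 0, provided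
  -- all the d+2 simplices involved are Euclidean (i.e. are generators)
  {z | ∃ y : Fin (d + 2) → (Fin d → F), ∃ gs : Fin (d + 2) → EucGen F d,
        (∀ i j, (gs i).B = (gs j).B ∧ (gs i).vol = (gs j).vol) ∧
        (∀ i, (gs i).x = fun j => y (i.succAbove j)) ∧
        z = ∑ i : Fin (d + 2), ((-1 : ℤ) ^ (i : ℕ)) • of (gs i)} ∪
  -- (iv) affine invariance: (x; B, vol) = (g·x; g·B, g·vol)
  {z | ∃ g h : EucGen F d, ∃ T : (Fin d → F) ≃ₗ[F] (Fin d → F), ∃ c : Fin d → F,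
        (∀ i, h.x i = T (g.x i) + c) ∧
        (∀ v w, h.B v w = g.B (T.symm v) (T.symm w)) ∧
        (∀ v, h.vol v = g.vol fun i => T.symm (v i)) ∧
        z = of h - of g}

/-- The Euclidean scissor congruence group `E_n(F)` (with `d = 2n−1`). -/
def EucSC : Type :=
  FreeAbelianGroup (EucGen F d) ⧸ AddSubgroup.closure (eucRelations (F := F) (d := d))

instance : AddCommGroup (EucSC (F := F) (d := d)) :=
  inferInstanceAs (AddCommGroup
    (FreeAbelianGroup (EucGen F d) ⧸ AddSubgroup.closure (eucRelations (F := F) (d := d))))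

/-- Class of a generator in `E_n(F)`. -/
def eucMk (g : EucGen F d) : EucSC (F := F) (d := d) :=
  QuotientAddGroup.mk (of g)

section Aux

variable {M : Type} [AddCommGroup M] [Module F M]

/-- Subtracting the `j`-th vector from vectors at indices in `S` (with `j ∉ S`)
does not change the value of an alternating map. -/
lemma alt_sub_invariant (f : AlternatingMap F M F (Fin d)) (w : Fin d → M) (j : Fin d)
    (S : Finset (Fin d)) (hj : j ∉ S) :
    f (fun i => if i ∈ S then w i - w j else w i) = f w := by
  classical
  revert hj
  induction S using Finset.induction_on with
  | empty => intro _; simp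
  | @insert a S ha ih =>
    intro hj
    have hja : j ≠ a := fun h => hj (h ▸ Finset.mem_insert_self a S)
    have hjS : j ∉ S := fun h => hj (Finset.mem_insert_of_mem h)
    have key : (fun i => if i ∈ insert a S then w i - w j else w i)
        = Function.update (fun i => if i ∈ S then w i - w j else w i) a (w a - w j) := by
      funext i
      rcases eq_or_ne i a with rfl | hia
      · simp [ha]
      · simp [Function.update_of_ne hia, Finset.mem_insert, hia]
    rw [key, AlternatingMap.map_update_sub]
    have e1 : Function.update (fun i => if i ∈ S then w i - w j else w i) a (w a)
        = fun i => if i ∈ S then w i - w j else w i := by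
      have hva : (fun i => if i ∈ S then w i - w j else w i) a = w a := by simp [ha]
      conv_lhs => rw [← hva]
      exact Function.update_eq_self a _
    have e2 : f (Function.update (fun i => if i ∈ S then w i - w j else w i) a (w j)) = 0 := by
      refine f.map_eq_zero_of_eq _ (i := a) (j := j) ?_ hja.symm
      simp [Function.update_of_ne hja, hjS]
    rw [e1, e2, ih hjS, sub_zero]

lemma alt_neg_sub (f : AlternatingMap F M F (Fin d)) (u : Fin d → M) (k : Fin d) :
    f (fun i => if i = k then -u k else u i - u k) = - f u := by
  classical
  set v : Fin d → M := fun i => if i ∈ Finset.univ.erase k then u i - u k else u i with hv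
  have hfv : f v = f u := alt_sub_invariant f u k _ (by simp)
  have key : (fun i => if i = k then -u k else u i - u k)
      = Function.update v k ((-1 : F) • u k) := by
    funext i
    rcases eq_or_ne i k with rfl | hik
    · simp [hv]
    · simp [hv, Function.update_of_ne hik, Finset.mem_erase, hik]
  have hvk : v k = u k := by simp [hv]
  rw [key, AlternatingMap.map_update_smul]
  rw [← hvk, Function.update_eq_self, hfv, neg_one_smul]

lemma omega_swap_zero (f : AlternatingMap F M F (Fin d)) (y : Fin (d + 1) → M)
    (b : Fin (d + 1)) (hb : b ≠ 0) :
    f (fun i => y (Equiv.swap 0 b i.succ) - y (Equiv.swap 0 b 0)) =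
      - f (fun i => y i.succ - y 0) := by
  classical
  obtain ⟨k, rfl⟩ : ∃ k : Fin d, b = k.succ := ⟨b.pred hb, (Fin.succ_pred b hb).symm⟩
  have key : (fun i => y (Equiv.swap 0 k.succ i.succ) - y (Equiv.swap 0 k.succ 0))
      = fun i => if i = k then -((fun i : Fin d => y i.succ - y 0) k)
          else (y i.succ - y 0) - (y k.succ - y 0) := by
    funext i
    rw [Equiv.swap_apply_left]
    rcases eq_or_ne i k with rfl | hik
    · rw [if_pos rfl, Equiv.swap_apply_right, neg_sub]
    · rw [if_neg hik]
      have hsb : i.succ ≠ k.succ := fun h => hik (Fin.succ_injective d h)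
      rw [Equiv.swap_apply_of_ne_of_ne (Fin.succ_ne_zero i) hsb]
      abel
  rw [key, alt_neg_sub f (fun i : Fin d => y i.succ - y 0) k]

lemma omega_swap (f : AlternatingMap F M F (Fin d)) (y : Fin (d + 1) → M)
    (a b : Fin (d + 1)) (hab : a ≠ b) :
    f (fun i => y (Equiv.swap a b i.succ) - y (Equiv.swap a b 0)) =
      - f (fun i => y i.succ - y 0) := by
  rcases eq_or_ne a 0 with rfl | ha
  · exact omega_swap_zero f y b (Ne.symm hab)
  rcases eq_or_ne b 0 with rfl | hbz
  · rw [Equiv.swap_comm]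
    exact omega_swap_zero f y a ha
  · have h0 : Equiv.swap a b 0 = 0 := Equiv.swap_apply_of_ne_of_ne (Ne.symm ha) (Ne.symm hbz)
    have hab' : a.pred ha ≠ b.pred hbz := by
      intro h
      apply hab
      rw [← Fin.succ_pred a ha, ← Fin.succ_pred b hbz, h]
    have key : (fun i => y (Equiv.swap a b i.succ) - y (Equiv.swap a b 0))
        = (fun i => y i.succ - y 0) ∘ (Equiv.swap (a.pred ha) (b.pred hbz)) := by
      funext i
      rw [h0]
      simp only [Function.comp]
      congr 2
      have := (Fin.succ_injective d).swap_apply (a.pred ha) (b.pred hbz) i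
      rw [Fin.succ_pred, Fin.succ_pred] at this
      exact this
    rw [key, AlternatingMap.map_swap f _ hab']

lemma omega_perm (f : AlternatingMap F M F (Fin d)) (σ : Equiv.Perm (Fin (d + 1))) :
    ∀ y : Fin (d + 1) → M,
      f (fun i => y (σ i.succ) - y (σ 0)) =
        (Equiv.Perm.sign σ : ℤ) • f (fun i => y i.succ - y 0) := by
  refine Equiv.Perm.swap_induction_on (motive := fun σ => ∀ y : Fin (d + 1) → M,
      f (fun i => y (σ i.succ) - y (σ 0)) =
        (Equiv.Perm.sign σ : ℤ) • f (fun i => y i.succ - y 0)) σ (fun y => by simp) ?_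
  intro π x x' hxx' ih y
  have e1 : (fun i : Fin d => y ((Equiv.swap x x' * π) i.succ) - y ((Equiv.swap x x' * π) 0))
      = fun i : Fin d => (y ∘ Equiv.swap x x') (π i.succ) - (y ∘ Equiv.swap x x') (π 0) := by
    funext i; simp [Equiv.Perm.mul_apply]
  have e2 : (fun i : Fin d => (y ∘ Equiv.swap x x') i.succ - (y ∘ Equiv.swap x x') 0)
      = fun i : Fin d => y (Equiv.swap x x' i.succ) - y (Equiv.swap x x' 0) := rfl
  rw [e1, ih (y ∘ Equiv.swap x x'), e2, omega_swap f y x x' hxx']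
  rw [Equiv.Perm.sign_mul, Equiv.Perm.sign_swap hxx']
  simp

lemma val_succAbove' {m : ℕ} (a : Fin (m + 1)) (b : Fin m) :
    ((a.succAbove b : Fin (m + 1)) : ℕ) = if (b : ℕ) < (a : ℕ) then (b : ℕ) else (b : ℕ) + 1 := by
  by_cases h : (b : ℕ) < (a : ℕ)
  · rw [if_pos h, Fin.succAbove_of_castSucc_lt _ _ (by rwa [Fin.lt_def])]
    rfl
  · rw [if_neg h, Fin.succAbove_of_le_castSucc _ _ (by rw [Fin.le_def, Fin.coe_castSucc]; omega)]
    rfl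

lemma boundary_expansion {e : ℕ} (f : AlternatingMap F M F (Fin e)) (z : Fin (e + 1) → M) :
    f (fun i => z i.succ - z 0) =
      ∑ j : Fin (e + 1), (-1 : F) ^ (j : ℕ) * f (z ∘ j.succAbove) := by
  classical
  cases e with
  | zero =>
    rw [Fin.sum_univ_one]
    simp only [Fin.val_zero, pow_zero, one_mul]
    congr 1
    funext i
    exact i.elim0
  | succ m =>
    have claim : ∀ S : Finset (Fin (m + 1)),
        f (fun i => if i ∈ S then z i.succ - z 0 else z i.succ)
          = f (fun i => z i.succ)
              - ∑ j ∈ S, f (Function.update (fun i : Fin (m + 1) => z i.succ) j (z 0)) := by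
      intro S
      induction S using Finset.induction_on with
      | empty => simp
      | @insert a S ha ih =>
        have key : (fun i => if i ∈ insert a S then z i.succ - z 0 else z i.succ)
            = Function.update (fun i => if i ∈ S then z i.succ - z 0 else z i.succ) a
                (z a.succ - z 0) := by
          funext i
          rcases eq_or_ne i a with rfl | hia
          · simp [ha]
          · simp [Function.update_of_ne hia, Finset.mem_insert, hia]
        rw [key, AlternatingMap.map_update_sub]
        have e1 : Function.update (fun i => if i ∈ S then z i.succ - z 0 else z i.succ) a
            (z a.succ) = fun i => if i ∈ S then z i.succ - z 0 else z i.succ := by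
          have hva : (fun i => if i ∈ S then z i.succ - z 0 else z i.succ) a = z a.succ := by
            simp [ha]
          conv_lhs => rw [← hva]
          exact Function.update_eq_self a _
        have e2 : f (Function.update (fun i => if i ∈ S then z i.succ - z 0 else z i.succ) a
            (z 0)) = f (Function.update (fun i : Fin (m + 1) => z i.succ) a (z 0)) := by
          have hfam : Function.update (fun i => if i ∈ S then z i.succ - z 0 else z i.succ) a
              (z 0) = fun i => if i ∈ S
                then (Function.update (fun i : Fin (m + 1) => z i.succ) a (z 0)) i
                  - (Function.update (fun i : Fin (m + 1) => z i.succ) a (z 0)) a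
                else (Function.update (fun i : Fin (m + 1) => z i.succ) a (z 0)) i := by
            funext i
            rcases eq_or_ne i a with rfl | hia
            · simp [ha]
            · by_cases hiS : i ∈ S <;> simp [Function.update_of_ne hia, hiS]
          rw [hfam, alt_sub_invariant f _ a S ha]
        rw [e1, e2, ih, Finset.sum_insert ha]
        ring
    have base := claim Finset.univ
    simp only [Finset.mem_univ, if_true] at base
    have upd : ∀ j : Fin (m + 1), f (Function.update (fun i : Fin (m + 1) => z i.succ) j (z 0))
        = (-1 : F) ^ (j : ℕ) * f (z ∘ (Fin.succ j).succAbove) := by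
      intro j
      have key : Function.update (fun i : Fin (m + 1) => z i.succ) j (z 0)
          = (z ∘ (Fin.succ j).succAbove) ∘ (Fin.cycleRange j) := by
        funext l
        simp only [Function.comp]
        rcases lt_trichotomy l j with hl | rfl | hl
        · have hlj : (l : ℕ) < (j : ℕ) := hl
          rw [Function.update_of_ne (ne_of_lt hl)]
          congr 1
          apply Fin.ext
          simp only [val_succAbove', Fin.coe_cycleRange_of_lt hl, Fin.val_succ]
          rw [if_pos (by omega)]
        · rw [Fin.cycleRange_self, Function.update_self]
          have h00 : (Fin.succ l).succAbove 0 = 0 := by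
            apply Fin.ext
            rw [val_succAbove']
            simp
          rw [h00]
        · have hlj : (j : ℕ) < (l : ℕ) := hl
          rw [Fin.cycleRange_of_gt hl, Function.update_of_ne (ne_of_gt hl)]
          congr 1
          apply Fin.ext
          simp only [val_succAbove', Fin.val_succ]
          rw [if_neg (by omega)]
      rw [key, AlternatingMap.map_perm, Fin.sign_cycleRange]
      rw [Units.smul_def]
      push_cast
      rw [zsmul_eq_mul]
      push_cast
      ring
    have h0 : (fun i : Fin (m + 1) => z i.succ) = z ∘ (0 : Fin (m + 2)).succAbove := by
      funext i
      rw [Function.comp_apply, Fin.zero_succAbove]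
    rw [base]
    simp only [upd]
    rw [h0]
    conv_rhs => rw [Fin.sum_univ_succ]
    have hneg : ∑ j : Fin (m + 1), (-1 : F) ^ ((j.succ : Fin (m + 2)) : ℕ) * f (z ∘ (Fin.succ j).succAbove)
        = - ∑ j : Fin (m + 1), (-1 : F) ^ (j : ℕ) * f (z ∘ (Fin.succ j).succAbove) := by
      rw [← Finset.sum_neg_distrib]
      refine Finset.sum_congr rfl fun j _ => ?_
      rw [Fin.val_succ, pow_succ]
      ring
    rw [hneg, Fin.val_zero, pow_zero, one_mul]
    ring

lemma succAbove_comp_key {e : ℕ} (a c : Fin (e + 2)) (b j : Fin (e + 1))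
    (h1 : (b : ℕ) < (a : ℕ)) (h2 : (c : ℕ) = (b : ℕ)) (h3 : (j : ℕ) = (a : ℕ) - 1)
    (k : Fin e) : a.succAbove (b.succAbove k) = c.succAbove (j.succAbove k) := by
  have hk := k.isLt
  have ha := a.isLt
  have hb := b.isLt
  apply Fin.ext
  rw [val_succAbove', val_succAbove', val_succAbove', val_succAbove']
  split_ifs <;> omega

lemma scissor_sum {e : ℕ} (f : AlternatingMap F M F (Fin e)) (y : Fin (e + 2) → M) :
    ∑ i : Fin (e + 2), (-1 : F) ^ (i : ℕ) *
      f (fun k => y (i.succAbove k.succ) - y (i.succAbove 0)) = 0 := by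
  classical
  have e1 : ∀ i : Fin (e + 2),
      f (fun k => y (i.succAbove k.succ) - y (i.succAbove 0))
        = ∑ j : Fin (e + 1), (-1 : F) ^ (j : ℕ) * f ((y ∘ i.succAbove) ∘ j.succAbove) :=
    fun i => boundary_expansion f (y ∘ i.succAbove)
  simp only [e1, Finset.mul_sum]
  rw [← Finset.sum_product']
  refine Finset.sum_involution
    (fun p _ => if h : (p.2 : ℕ) < (p.1 : ℕ)
      then (⟨(p.2 : ℕ), by omega⟩, ⟨(p.1 : ℕ) - 1, by have := p.1.isLt; omega⟩)
      else (⟨(p.2 : ℕ) + 1, by have := p.2.isLt; omega⟩, ⟨(p.1 : ℕ), by have := p.2.isLt; omega⟩))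
    ?_ ?_ (fun _ _ => Finset.mem_univ _) ?_
  · -- cancellation
    rintro ⟨a, b⟩ -
    dsimp only
    by_cases h : (b : ℕ) < (a : ℕ)
    · rw [dif_pos h]
      have hcomp : ∀ k, a.succAbove (b.succAbove k)
          = (⟨(b : ℕ), by omega⟩ : Fin (e + 2)).succAbove
              ((⟨(a : ℕ) - 1, by have := a.isLt; omega⟩ : Fin (e + 1)).succAbove k) :=
        fun k => succAbove_comp_key a _ b _ h rfl rfl k
      have hfun : (y ∘ a.succAbove) ∘ b.succAbove
          = (y ∘ (⟨(b : ℕ), by omega⟩ : Fin (e + 2)).succAbove) ∘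
              (⟨(a : ℕ) - 1, by have := a.isLt; omega⟩ : Fin (e + 1)).succAbove := by
        funext k
        simp only [Function.comp]
        rw [hcomp k]
      simp only [hfun]
      have hx : (-1 : F) ^ (a : ℕ) = -(-1 : F) ^ ((a : ℕ) - 1) := by
        obtain ⟨t, ht⟩ : ∃ t, (a : ℕ) = t + 1 := ⟨(a : ℕ) - 1, by omega⟩
        rw [ht, Nat.add_sub_cancel, pow_succ]
        ring
      rw [hx]
      ring
    · rw [dif_neg h]
      push_neg at h
      have hcomp : ∀ k, (⟨(b : ℕ) + 1, by have := b.isLt; omega⟩ : Fin (e + 2)).succAbove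
            ((⟨(a : ℕ), by have := b.isLt; omega⟩ : Fin (e + 1)).succAbove k)
          = a.succAbove (b.succAbove k) := by
        intro k
        refine succAbove_comp_key _ _ _ _ ?_ ?_ ?_ k
        · simp; omega
        · simp
        · simp
      have hfun : (y ∘ (⟨(b : ℕ) + 1, by have := b.isLt; omega⟩ : Fin (e + 2)).succAbove) ∘
            (⟨(a : ℕ), by have := b.isLt; omega⟩ : Fin (e + 1)).succAbove
          = (y ∘ a.succAbove) ∘ b.succAbove := by
        funext k
        simp only [Function.comp]
        rw [hcomp k]
      simp only [hfun]
      rw [pow_succ]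
      ring
  · -- g a ≠ a
    rintro ⟨a, b⟩ - -
    dsimp only
    by_cases h : (b : ℕ) < (a : ℕ)
    · rw [dif_pos h]
      intro hcontra
      have := congrArg (fun p => ((p.1 : Fin (e + 2)) : ℕ)) hcontra
      simp at this
      omega
    · rw [dif_neg h]
      push_neg at h
      intro hcontra
      have := congrArg (fun p => ((p.1 : Fin (e + 2)) : ℕ)) hcontra
      simp at this
      omega
  · -- involutive
    rintro ⟨a, b⟩ -
    dsimp only
    by_cases h : (b : ℕ) < (a : ℕ)
    · rw [dif_pos h]
      have h2 : ¬ (((⟨(a : ℕ) - 1, by have := a.isLt; omega⟩ : Fin (e + 1))) : ℕ)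
          < ((⟨(b : ℕ), by omega⟩ : Fin (e + 2)) : ℕ) := by simp; omega
      rw [dif_neg h2]
      ext <;> simp <;> omega
    · rw [dif_neg h]
      push_neg at h
      have h2 : (((⟨(a : ℕ), by have := b.isLt; omega⟩ : Fin (e + 1))) : ℕ)
          < ((⟨(b : ℕ) + 1, by have := b.isLt; omega⟩ : Fin (e + 2)) : ℕ) := by simp; omega
      rw [dif_pos h2]
      ext <;> simp

end Aux

/-- The volume assignment
`(x₀,...,x_{2n−1}; vol_Q) ↦ (1/(2n−1)!)·⟨(x₁−x₀)∧...∧(x_{2n−1}−x₀), vol_Q⟩`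
respects all defining relations of `E_n(F)` (degeneracy, skew-symmetry,
the scissor axiom, affine invariance), hence induces a group homomorphism
`Vol : E_n(F) → F`; and `Vol` intertwines the dilation action of `F*` on
`E_n(F)` with the action `f * v = f^{2n−1}·v` on `F`, i.e. it is a morphism of
`F*`-modules `E_n(F) → F⟨n−1⟩`.  (Here `d = 2n−1`.) -/
theorem volume_well_defined_on_euclidean_scissor_congruence_group
    (F : Type) [Field F] [CharZero F] (n : ℕ) (hn : 1 ≤ n) (d : ℕ)
    (hd : d + 1 = 2 * n) :
    -- (i) vanishing on degenerate simplices
    (∀ g : EucGen F d, (∃ φ : (Fin d → F) →ₗ[F] F, φ ≠ 0 ∧ ∃ c : F,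
        ∀ i, φ (g.x i) = c) → vol0 g = 0) ∧
    -- (ii a) sign change under vol ↦ −vol
    (∀ g h : EucGen F d, h.x = g.x → h.B = g.B → h.vol = -g.vol →
        vol0 h = -vol0 g) ∧
    -- (ii b) alternation under permutation of the vertices
    (∀ g h : EucGen F d, ∀ σ : Equiv.Perm (Fin (d + 1)),
        h.x = g.x ∘ σ → h.B = g.B → h.vol = g.vol →
        vol0 h = (Equiv.Perm.sign σ : ℤ) * vol0 g) ∧
    -- (iii) the scissor (alternating sum) relation
    (∀ y : Fin (d + 2) → (Fin d → F), ∀ gs : Fin (d + 2) → EucGen F d,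
        (∀ i j, (gs i).B = (gs j).B ∧ (gs i).vol = (gs j).vol) →
        (∀ i, (gs i).x = fun j => y (i.succAbove j)) →
        ∑ i : Fin (d + 2), (-1 : F) ^ (i : ℕ) * vol0 (gs i) = 0) ∧
    -- (iv) affine invariance (with the form and volume form transported)
    (∀ g h : EucGen F d, ∀ T : (Fin d → F) ≃ₗ[F] (Fin d → F), ∀ c : Fin d → F,
        (∀ i, h.x i = T (g.x i) + c) →
        (∀ v w, h.B v w = g.B (T.symm v) (T.symm w)) →
        (∀ v, h.vol v = g.vol fun i => T.symm (v i)) →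
        vol0 h = vol0 g) ∧
    -- hence a well-defined homomorphism Vol : E_n(F) → F ...
    (∃ Vol : EucSC (F := F) (d := d) →+ F,
      (∀ g : EucGen F d, Vol (eucMk g) = vol0 g) ∧
      -- ... which is a map of F*-modules E_n(F) → F⟨n−1⟩ for the dilation action
      (∀ f : Fˣ, ∀ g h : EucGen F d,
        (∀ i, h.x i = (f : F) • g.x i) → h.B = g.B → h.vol = g.vol →
        Vol (eucMk h) = (f : F) ^ (2 * n - 1) * Vol (eucMk g))) := by
  classical
  have hd1 : 1 ≤ d := by omega
  -- (i) degenerate simplices have volume zero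
  have part1 : ∀ g : EucGen F d, (∃ φ : (Fin d → F) →ₗ[F] F, φ ≠ 0 ∧ ∃ c : F,
      ∀ i, φ (g.x i) = c) → vol0 g = 0 := by
    rintro g ⟨φ, hφ, c, hc⟩
    have hdep : ¬ LinearIndependent F (fun i : Fin d => g.x i.succ - g.x 0) := by
      intro hLI
      have hsub : Submodule.span F (Set.range fun i : Fin d => g.x i.succ - g.x 0)
          ≤ LinearMap.ker φ := by
        rw [Submodule.span_le]
        rintro v ⟨i, rfl⟩
        simp [LinearMap.mem_ker, map_sub, hc]
      have h1 : Module.finrank F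
          (Submodule.span F (Set.range fun i : Fin d => g.x i.succ - g.x 0)) = d := by
        rw [finrank_span_eq_card hLI]
        simp
      have hsurj : Function.Surjective φ := by
        obtain ⟨x, hx⟩ : ∃ x, φ x ≠ 0 := by
          by_contra hcon
          push_neg at hcon
          exact hφ (LinearMap.ext fun x => hcon x)
        intro a
        exact ⟨(a * (φ x)⁻¹) • x, by rw [map_smul, smul_eq_mul]; field_simp⟩
      have h2 : Module.finrank F (LinearMap.range φ) = 1 := by
        rw [LinearMap.range_eq_top.mpr hsurj]
        simp
      have h3 := LinearMap.finrank_range_add_finrank_ker φ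
      rw [h2] at h3
      have hpi : Module.finrank F (Fin d → F) = d := by simp
      rw [hpi] at h3
      have h4 := Submodule.finrank_mono hsub
      rw [h1] at h4
      omega
    unfold vol0
    rw [AlternatingMap.map_linearDependent g.vol _ hdep, mul_zero]
  -- (ii a)
  have part2 : ∀ g h : EucGen F d, h.x = g.x → h.B = g.B → h.vol = -g.vol →
      vol0 h = -vol0 g := by
    intro g h hx hB hvol
    unfold vol0
    rw [hvol, hx, AlternatingMap.neg_apply]
    ring
  -- (ii b)
  have part3 : ∀ g h : EucGen F d, ∀ σ : Equiv.Perm (Fin (d + 1)),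
      h.x = g.x ∘ σ → h.B = g.B → h.vol = g.vol →
      vol0 h = (Equiv.Perm.sign σ : ℤ) * vol0 g := by
    intro g h σ hx hB hvol
    unfold vol0
    rw [hvol, hx]
    have e : (fun i : Fin d => (g.x ∘ σ) i.succ - (g.x ∘ σ) 0)
        = fun i : Fin d => g.x (σ i.succ) - g.x (σ 0) := rfl
    rw [e, omega_perm g.vol σ g.x, zsmul_eq_mul]
    ring
  -- (iii)
  have part4 : ∀ y : Fin (d + 2) → (Fin d → F), ∀ gs : Fin (d + 2) → EucGen F d,
      (∀ i j, (gs i).B = (gs j).B ∧ (gs i).vol = (gs j).vol) →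
      (∀ i, (gs i).x = fun j => y (i.succAbove j)) →
      ∑ i : Fin (d + 2), (-1 : F) ^ (i : ℕ) * vol0 (gs i) = 0 := by
    intro y gs hBvol hx
    have hv : ∀ i, vol0 (gs i) = ((Nat.factorial d : F))⁻¹ *
        (gs 0).vol (fun k : Fin d => y (i.succAbove k.succ) - y (i.succAbove 0)) := by
      intro i
      unfold vol0
      rw [(hBvol i 0).2, hx i]
    calc ∑ i : Fin (d + 2), (-1 : F) ^ (i : ℕ) * vol0 (gs i)
        = ((Nat.factorial d : F))⁻¹ * ∑ i : Fin (d + 2), (-1 : F) ^ (i : ℕ) *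
            (gs 0).vol (fun k : Fin d => y (i.succAbove k.succ) - y (i.succAbove 0)) := by
          rw [Finset.mul_sum]
          exact Finset.sum_congr rfl fun i _ => by rw [hv i]; ring
      _ = 0 := by rw [scissor_sum]; ring
  -- (iv)
  have part5 : ∀ g h : EucGen F d, ∀ T : (Fin d → F) ≃ₗ[F] (Fin d → F), ∀ c : Fin d → F,
      (∀ i, h.x i = T (g.x i) + c) →
      (∀ v w, h.B v w = g.B (T.symm v) (T.symm w)) →
      (∀ v, h.vol v = g.vol fun i => T.symm (v i)) →
      vol0 h = vol0 g := by
    intro g h T c hx hB hvol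
    unfold vol0
    rw [hvol]
    congr 1
    congr 1
    funext i
    rw [hx, hx]
    simp [add_sub_add_right_eq_sub, map_sub]
  refine ⟨part1, part2, part3, part4, part5, ?_⟩
  -- the induced homomorphism
  set L : FreeAbelianGroup (EucGen F d) →+ F := FreeAbelianGroup.lift vol0 with hLdef
  have hLof : ∀ g : EucGen F d, L (of g) = vol0 g := fun g => FreeAbelianGroup.lift_apply_of (f := vol0) (x := g)
  have hrel : ∀ z ∈ eucRelations (F := F) (d := d), z ∈ L.ker := by
    intro z hz
    simp only [eucRelations, Set.mem_union, Set.mem_setOf_eq] at hz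
    rcases hz with ((((⟨g, hdeg, rfl⟩ | ⟨g, h, h1, h2, h3, rfl⟩) | ⟨g, h, σ, h1, h2, h3, rfl⟩) |
      ⟨y, gs, h1, h2, rfl⟩) | ⟨g, h, T, c, h1, h2, h3, rfl⟩)
    · rw [AddMonoidHom.mem_ker, hLof, part1 g hdeg]
    · rw [AddMonoidHom.mem_ker, map_add, hLof, hLof, part2 g h h1 h2 h3, neg_add_cancel]
    · rw [AddMonoidHom.mem_ker, map_sub, map_zsmul, hLof, hLof, part3 g h σ h1 h2 h3,
        zsmul_eq_mul, sub_self]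
    · rw [AddMonoidHom.mem_ker, map_sum]
      simp only [map_zsmul, hLof, zsmul_eq_mul]
      push_cast
      exact part4 y gs h1 h2
    · rw [AddMonoidHom.mem_ker, map_sub, hLof, hLof, part5 g h T c h1 h2 h3, sub_self]
  have hker : AddSubgroup.closure (eucRelations (F := F) (d := d)) ≤ L.ker :=
    (AddSubgroup.closure_le _).mpr hrel
  refine ⟨QuotientAddGroup.lift _ L hker, ?_, ?_⟩
  · intro g
    exact hLof g
  · intro f g h hx hB hvol
    have hVg : ∀ k : EucGen F d,
        QuotientAddGroup.lift _ L hker (eucMk k) = vol0 k := fun k => hLof k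
    refine (hVg h).trans (Eq.trans ?_
      (congrArg (fun t => (f : F) ^ (2 * n - 1) * t) (hVg g).symm))
    have hvol0 : vol0 h = (f : F) ^ d * vol0 g := by
      unfold vol0
      rw [hvol]
      have e : (fun i : Fin d => h.x i.succ - h.x 0)
          = fun i : Fin d => (f : F) • (g.x i.succ - g.x 0) := by
        funext i
        rw [hx, hx, smul_sub]
      rw [e]
      have h5 : (g.vol fun i : Fin d => (f : F) • (g.x i.succ - g.x 0))
          = (∏ _i : Fin d, (f : F)) • g.vol (fun i : Fin d => g.x i.succ - g.x 0) :=
        g.vol.toMultilinearMap.map_smul_univ (fun _ : Fin d => (f : F))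
          (fun i : Fin d => g.x i.succ - g.x 0)
      rw [h5, Finset.prod_const, Finset.card_univ, Fintype.card_fin, smul_eq_mul]
      ring
    rw [hvol0, show 2 * n - 1 = d from by omega]


end
end

section
/- For n = 1, the 'length' map sending a generator (x₀, x₁; vol_Q) of E_1(F) to ⟨x₁ − x₀, vol_Q⟩ ∈ F induces an isomorphism of groups E_1(F) ≅ F. -/
noncomputable section

open FreeAbelianGroup

variable (F : Type) [Field F] [CharZero F] (d : ℕ)

variable {F d}

/-! ### Auxiliary material for `d = 1` -/

section Aux

set_option linter.unusedSectionVars false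

variable {F : Type} [Field F] [CharZero F]

/-- the constant-one vector in `Fin 1 → F` -/
def oneVec : Fin 1 → F := fun _ => 1

lemma vec_eq_smul (w : Fin 1 → F) : w = w 0 • (oneVec : Fin 1 → F) := by
  funext j
  have : j = 0 := Subsingleton.elim _ _
  subst this
  simp [oneVec]

lemma vol_apply (V : AlternatingMap F (Fin 1 → F) F (Fin 1)) (w : Fin 1 → F) :
    V (fun _ => w) = w 0 * V (fun _ => oneVec) := by
  have h1 : (fun _ : Fin 1 => w)
      = Function.update (fun _ : Fin 1 => (oneVec : Fin 1 → F)) 0 (w 0 • oneVec) := by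
    funext j
    have : j = 0 := Subsingleton.elim _ _
    subst this
    rw [Function.update_self, ← vec_eq_smul]
  rw [h1, V.map_update_smul, Function.update_eq_self]
  simp

/-- a bilinear form on `Fin 1 → F` is determined by its value on `(oneVec, oneVec)` -/
lemma bilin_apply (B : LinearMap.BilinForm F (Fin 1 → F)) (v w : Fin 1 → F) :
    B v w = v 0 * w 0 * B oneVec oneVec := by
  conv_lhs => rw [vec_eq_smul v, vec_eq_smul w]
  simp only [map_smul, LinearMap.smul_apply, smul_eq_mul]
  ring

/-- the standard bilinear form on `Fin 1 → F` -/
def stdB : LinearMap.BilinForm F (Fin 1 → F) :=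
  LinearMap.mk₂ F (fun v w => v 0 * w 0)
    (fun a b c => by simp [add_mul]) (fun a b c => by simp [mul_assoc])
    (fun a b c => by simp [mul_add]) (fun a b c => by simp [Pi.smul_apply]; ring)

@[simp] lemma stdB_apply (v w : Fin 1 → F) : (stdB v w : F) = v 0 * w 0 := rfl

/-- the standard volume form on `Fin 1 → F` -/
def stdVol : AlternatingMap F (Fin 1 → F) F (Fin 1) :=
  AlternatingMap.ofSubsingleton F (Fin 1 → F) F 0 (LinearMap.proj 0)

@[simp] lemma stdVol_apply (v : Fin 1 → (Fin 1 → F)) : (stdVol v : F) = v 0 0 := rfl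

/-- generator with standard Euclidean structure and arbitrary vertices -/
def stdGen (x : Fin 2 → (Fin 1 → F)) : EucGen F 1 where
  x := x
  B := stdB
  symm := ⟨fun v w => by simp [mul_comm]⟩
  nondeg := by
    constructor
    all_goals
      intro v hv
      have := hv v
      simp only [stdB_apply] at this
      have h0 : v 0 = 0 := by
        have := mul_self_eq_zero.mp this
        exact this
      funext j
      have : j = 0 := Subsingleton.elim _ _
      subst this; exact h0
  vol := stdVol
  hvol := by
    intro v
    simp [Matrix.det_fin_one, sq]
  euclidean := by
    intro s hs
    constructor
    all_goals
      intro v hv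
      have := hv v
      have h0 : (v : Fin 1 → F) 0 = 0 := by
        simpa [LinearMap.BilinForm.restrict_apply, mul_self_eq_zero] using this
      apply Subtype.ext
      funext j
      have : j = 0 := Subsingleton.elim _ _
      subst this; exact h0

/-- the standard generator of length `c`: vertices `0` and `c` -/
def genC (c : F) : EucGen F 1 := stdGen ![0, fun _ => c]

/-- the length of a generator -/
def len (g : EucGen F 1) : F := g.vol (fun _ : Fin 1 => g.x 1 - g.x 0)

@[simp] lemma len_stdGen (x : Fin 2 → (Fin 1 → F)) :
    len (stdGen x) = x 1 0 - x 0 0 := by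
  simp [len, stdGen]

@[simp] lemma len_genC (c : F) : len (genC c) = c := by
  simp [genC]

/-- The length homomorphism on the free abelian group. -/
def lenHom : FreeAbelianGroup (EucGen F 1) →+ F :=
  FreeAbelianGroup.lift len

@[simp] lemma lenHom_of (g : EucGen F 1) : lenHom (of g) = len g :=
  FreeAbelianGroup.lift_apply_of (f := len) g

lemma a_ne_zero (g : EucGen F 1) : g.vol (fun _ => (oneVec : Fin 1 → F)) ≠ 0 := by
  intro h
  have hb : g.B oneVec oneVec = 0 := by
    have := g.hvol (fun _ => oneVec)
    rw [h] at this
    simpa [Matrix.det_fin_one] using this.symm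
  have : (oneVec : Fin 1 → F) = 0 := by
    apply g.nondeg.1
    intro w
    rw [bilin_apply, hb, mul_zero]
  have := congrFun this 0
  simp [oneVec] at this

lemma a_sq (g : EucGen F 1) :
    g.vol (fun _ => (oneVec : Fin 1 → F)) ^ 2 = g.B oneVec oneVec := by
  have := g.hvol (fun _ => oneVec)
  simpa [Matrix.det_fin_one] using this

/-- Every generator is congruent (via relation (iv)) to the standard generator
of its length. -/
lemma eucMk_eq_genC (g : EucGen F 1) : eucMk g = eucMk (genC (len g)) := by
  set a : F := g.vol (fun _ => (oneVec : Fin 1 → F)) with ha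
  have haz : a ≠ 0 := a_ne_zero g
  set T : (Fin 1 → F) ≃ₗ[F] (Fin 1 → F) := LinearEquiv.smulOfNeZero F _ a haz with hT
  have hTapp : ∀ v : Fin 1 → F, T v = a • v := fun v => rfl
  have hTsymm : ∀ v : Fin 1 → F, T.symm v = a⁻¹ • v := by
    intro v
    apply T.injective
    rw [T.apply_symm_apply, hTapp, smul_smul, mul_inv_cancel₀ haz, one_smul]
  have hrel : of (genC (len g)) - of g ∈ eucRelations (F := F) (d := 1) := by
    refine Or.inr ?_
    refine ⟨g, genC (len g), T, -(a • g.x 0), ?_, ?_, ?_, rfl⟩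
    · intro i
      fin_cases i
      · show (0 : Fin 1 → F) = T (g.x 0) + -(a • g.x 0)
        rw [hTapp]; abel
      · show (fun _ : Fin 1 => len g) = T (g.x 1) + -(a • g.x 0)
        rw [hTapp]
        funext j
        have hj : j = 0 := Subsingleton.elim _ _
        subst hj
        have : len g = a * (g.x 1 0 - g.x 0 0) := by
          rw [len, vol_apply, ← ha]
          simp [mul_comm]
        rw [this]
        simp [Pi.smul_apply, smul_eq_mul]
        ring
    · intro v w
      rw [hTsymm, hTsymm]
      show (stdB v w : F) = g.B (a⁻¹ • v) (a⁻¹ • w)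
      rw [bilin_apply g.B, stdB_apply]
      have hb : g.B oneVec oneVec = a ^ 2 := (a_sq g).symm
      simp only [Pi.smul_apply, smul_eq_mul, hb]
      have hA : a⁻¹ * a = 1 := inv_mul_cancel₀ haz
      calc v 0 * w 0 = (a⁻¹ * a) * ((a⁻¹ * a) * (v 0 * w 0)) := by rw [hA]; ring
        _ = a⁻¹ * v 0 * (a⁻¹ * w 0) * a ^ 2 := by ring
    · intro v
      show (stdVol v : F) = g.vol (fun i => T.symm (v i))
      have : (fun i : Fin 1 => T.symm (v i)) = (fun _ : Fin 1 => T.symm (v 0)) := by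
        funext j
        have : j = 0 := Subsingleton.elim _ _
        subst this; rfl
      rw [this, vol_apply, hTsymm, ← ha]
      simp only [Pi.smul_apply, smul_eq_mul, stdVol_apply]
      rw [mul_comm, ← mul_assoc, mul_inv_cancel₀ haz, one_mul]
  have hmem : of (genC (len g)) - of g ∈
      AddSubgroup.closure (eucRelations (F := F) (d := 1)) :=
    AddSubgroup.subset_closure hrel
  show QuotientAddGroup.mk (of g) = QuotientAddGroup.mk (of (genC (len g)))
  exact ((QuotientAddGroup.eq_iff_sub_mem).mpr hmem).symm

lemma eucMk_genC_zero : eucMk (genC (0 : F)) = 0 := by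
  have hrel : of (genC (0 : F)) ∈ eucRelations (F := F) (d := 1) := by
    refine Or.inl (Or.inl (Or.inl (Or.inl ?_)))
    refine ⟨genC 0, ⟨LinearMap.proj 0, ?_, 0, ?_⟩, rfl⟩
    · intro h
      have := congrFun (congrArg DFunLike.coe h) (oneVec : Fin 1 → F)
      simp [oneVec] at this
    · intro i
      fin_cases i <;> rfl
  exact (QuotientAddGroup.eq_zero_iff _).mpr (AddSubgroup.subset_closure hrel)

lemma eucMk_genC_add (c₁ c₂ : F) :
    eucMk (genC (c₁ + c₂)) = eucMk (genC c₁) + eucMk (genC c₂) := by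
  set y : Fin 3 → (Fin 1 → F) := ![0, fun _ => c₁, fun _ => c₁ + c₂] with hy
  set gs : Fin 3 → EucGen F 1 := fun i => stdGen (fun j => y (i.succAbove j)) with hgs
  have hrel : (∑ i : Fin 3, ((-1 : ℤ) ^ (i : ℕ)) • of (gs i))
      ∈ eucRelations (F := F) (d := 1) := by
    refine Or.inl (Or.inr ?_)
    exact ⟨y, gs, fun i j => ⟨rfl, rfl⟩, fun i => rfl, rfl⟩
  have h0 : QuotientAddGroup.mk (s := AddSubgroup.closure (eucRelations (F := F) (d := 1)))
      (∑ i : Fin 3, ((-1 : ℤ) ^ (i : ℕ)) • of (gs i)) = 0 :=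
    (QuotientAddGroup.eq_zero_iff _).mpr (AddSubgroup.subset_closure hrel)
  have hsum : (∑ i : Fin 3, ((-1 : ℤ) ^ (i : ℕ)) • of (gs i))
      = of (gs 0) - of (gs 1) + of (gs 2) := by
    rw [Fin.sum_univ_three]
    norm_num
    abel
  rw [hsum] at h0
  set π : FreeAbelianGroup (EucGen F 1) →+ EucSC (F := F) (d := 1) :=
    QuotientAddGroup.mk' (AddSubgroup.closure (eucRelations (F := F) (d := 1))) with hπ
  have hmk : eucMk (gs 0) - eucMk (gs 1) + eucMk (gs 2) = 0 := by
    have h0' : π (of (gs 0) - of (gs 1) + of (gs 2)) = 0 := h0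
    rw [map_add, map_sub] at h0'
    exact h0'
  have l0 : len (gs 0) = c₂ := by
    show len (stdGen (fun j => y ((0 : Fin 3).succAbove j))) = c₂
    rw [len_stdGen]
    show y 2 0 - y 1 0 = c₂
    simp [hy]
  have l1 : len (gs 1) = c₁ + c₂ := by
    show len (stdGen (fun j => y ((1 : Fin 3).succAbove j))) = c₁ + c₂
    rw [len_stdGen]
    show y 2 0 - y 0 0 = c₁ + c₂
    simp [hy]
  have l2 : len (gs 2) = c₁ := by
    show len (stdGen (fun j => y ((2 : Fin 3).succAbove j))) = c₁
    rw [len_stdGen]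
    show y 1 0 - y 0 0 = c₁
    simp [hy]
  have e0 : eucMk (gs 0) = eucMk (genC c₂) := by rw [eucMk_eq_genC (gs 0), l0]
  have e1 : eucMk (gs 1) = eucMk (genC (c₁ + c₂)) := by rw [eucMk_eq_genC (gs 1), l1]
  have e2 : eucMk (gs 2) = eucMk (genC c₁) := by rw [eucMk_eq_genC (gs 2), l2]
  rw [e0, e1, e2] at hmk
  have h3 : eucMk (genC c₁) + eucMk (genC c₂) - eucMk (genC (c₁ + c₂)) = 0 := by
    rw [← hmk]; abel
  exact (sub_eq_zero.mp h3).symm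

lemma eucMk_genC_neg (c : F) : eucMk (genC (-c)) = -eucMk (genC c) := by
  have h := eucMk_genC_add c (-c)
  rw [add_neg_cancel, eucMk_genC_zero] at h
  exact (neg_eq_of_add_eq_zero_right h.symm).symm

/-- The relations are killed by the length homomorphism. -/
lemma relations_le_ker :
    AddSubgroup.closure (eucRelations (F := F) (d := 1)) ≤ lenHom.ker := by
  rw [AddSubgroup.closure_le]
  rintro z (((((⟨g, ⟨φ, hφ, c, hc⟩, rfl⟩ | ⟨g, h, hx, hB, hvol, rfl⟩) |
      ⟨g, h, σ, hx, hB, hvol, rfl⟩) | ⟨y, gs, hBV, hx, rfl⟩) |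
      ⟨g, h, T, c, hx, hB, hvol, rfl⟩))
  · -- degenerate
    simp only [SetLike.mem_coe, AddMonoidHom.mem_ker, lenHom_of]
    have hφ1 : φ (oneVec : Fin 1 → F) ≠ 0 := by
      intro h0
      apply hφ
      apply LinearMap.ext
      intro w
      rw [vec_eq_smul w, map_smul, h0]
      simp
    have hxx : g.x 1 = g.x 0 := by
      have h1 := hc 1
      have h0 := hc 0
      have : φ (g.x 1) = φ (g.x 0) := by rw [h1, h0]
      rw [vec_eq_smul (g.x 1), vec_eq_smul (g.x 0), map_smul, map_smul] at this
      simp only [smul_eq_mul] at this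
      have := mul_right_cancel₀ hφ1 this
      rw [vec_eq_smul (g.x 1), vec_eq_smul (g.x 0), this]
    rw [len, hxx, sub_self]
    have : (fun _ : Fin 1 => (0 : Fin 1 → F)) = (fun _ : Fin 1 => ((0 : F) • oneVec : Fin 1 → F)) := by
      funext j; simp
    rw [this]
    rw [show (fun _ : Fin 1 => ((0 : F) • oneVec : Fin 1 → F))
        = (fun _ : Fin 1 => (((0 : F) • oneVec : Fin 1 → F))) from rfl]
    rw [vol_apply]
    simp
  · -- vol negation
    simp only [SetLike.mem_coe, AddMonoidHom.mem_ker, map_add, lenHom_of]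
    rw [len, len, hx, hvol]
    simp
  · -- permutation
    simp only [SetLike.mem_coe, AddMonoidHom.mem_ker, map_sub, map_zsmul, lenHom_of]
    have hσ : σ = 1 ∨ σ = Equiv.swap 0 1 := by
      rcases em (σ 0 = 0) with h0 | h0'
      · left
        apply Equiv.ext
        intro j
        fin_cases j
        · exact h0
        · have : σ 1 ≠ σ 0 := fun h =>
            absurd (σ.injective h : (1 : Fin 2) = 0) (by decide)
          rw [h0] at this
          simpa using Fin.eq_one_of_ne_zero _ this
      · have h0 : σ 0 = 1 := Fin.eq_one_of_ne_zero _ h0'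
        right
        apply Equiv.ext
        intro j
        fin_cases j
        · simpa using h0
        · have hne : σ 1 ≠ 1 := fun h =>
            absurd (σ.injective (h.trans h0.symm) : (1 : Fin 2) = 0) (by decide)
          have h1 : σ 1 = 0 := by
            by_contra hzz
            exact hne (Fin.eq_one_of_ne_zero _ hzz)
          simpa using h1
    rcases hσ with rfl | rfl
    · simp only [map_one, Units.val_one, one_smul]
      rw [len, len, hx, hvol]
      simp
    · rw [Equiv.Perm.sign_swap (by decide)]
      rw [len, len, hx, hvol]
      simp only [Function.comp_apply, Equiv.swap_apply_left, Equiv.swap_apply_right,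
        Units.val_neg, Units.val_one, neg_smul, one_smul]
      rw [vol_apply _ (g.x 0 - g.x 1), vol_apply _ (g.x 1 - g.x 0)]
      simp only [Pi.sub_apply]
      ring
  · -- scissor
    simp only [SetLike.mem_coe, AddMonoidHom.mem_ker, map_sum, map_zsmul, lenHom_of]
    have hV : ∀ i : Fin 3, (gs i).vol = (gs 0).vol := fun i => (hBV i 0).2
    have hlen : ∀ i : Fin 3, len (gs i)
        = (gs 0).vol (fun _ : Fin 1 => y (i.succAbove 1) - y (i.succAbove 0)) := by
      intro i
      rw [len, hV i, hx i]
    rw [Fin.sum_univ_three]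
    rw [hlen 0, hlen 1, hlen 2]
    have h0 : (0 : Fin 3).succAbove 0 = 1 := rfl
    have h0' : (0 : Fin 3).succAbove 1 = 2 := rfl
    have h1 : (1 : Fin 3).succAbove 0 = 0 := rfl
    have h1' : (1 : Fin 3).succAbove 1 = 2 := rfl
    have h2 : (2 : Fin 3).succAbove 0 = 0 := rfl
    have h2' : (2 : Fin 3).succAbove 1 = 1 := rfl
    rw [h0, h0', h1, h1', h2, h2',
      vol_apply _ (y 2 - y 1), vol_apply _ (y 2 - y 0), vol_apply _ (y 1 - y 0)]
    simp only [Pi.sub_apply, Fin.val_zero, Fin.val_one, Fin.val_two,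
      pow_zero, pow_one, one_smul, zsmul_eq_mul]
    push_cast
    ring
  · -- affine invariance
    simp only [SetLike.mem_coe, AddMonoidHom.mem_ker, map_sub, lenHom_of]
    rw [len, len]
    have hd : h.x 1 - h.x 0 = T (g.x 1 - g.x 0) := by
      rw [hx 1, hx 0, map_sub]
      abel
    rw [hd, hvol]
    have : (fun i : Fin 1 => T.symm ((fun _ : Fin 1 => T (g.x 1 - g.x 0)) i))
        = (fun _ : Fin 1 => g.x 1 - g.x 0) := by
      funext j
      simp
    rw [this, sub_self]

/-- The induced length homomorphism on the quotient. -/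
def lenBar : EucSC (F := F) (d := 1) →+ F :=
  QuotientAddGroup.lift _ lenHom relations_le_ker

@[simp] lemma lenBar_eucMk (g : EucGen F 1) : lenBar (eucMk g) = len g := by
  show lenHom (of g) = len g
  exact lenHom_of g

end Aux

/-- for `n = 1` (so `d = 2n−1 = 1`), the length map sending a
generator `(x₀, x₁; vol_Q)` of `E₁(F)` to `⟨x₁ − x₀, vol_Q⟩ ∈ F` induces an
isomorphism of groups `E₁(F) ≅ F` (the additive group of `F`). -/
theorem length_induces_isomorphism_E1
    (F : Type) [Field F] [CharZero F] :
    ∃ e : EucSC (F := F) (d := 1) ≃+ F,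
      ∀ g : EucGen F 1,
        e (eucMk g) = g.vol (fun _ : Fin 1 => g.x 1 - g.x 0) := by
  have left_inv : ∀ z : EucSC (F := F) (d := 1), eucMk (genC (lenBar z)) = z := by
    intro z
    induction z using QuotientAddGroup.induction_on with
    | H w =>
      induction w using FreeAbelianGroup.induction_on with
      | zero =>
        have h : (QuotientAddGroup.mk (0 : FreeAbelianGroup (EucGen F 1))
            : EucSC (F := F) (d := 1)) = 0 := rfl
        rw [h]; erw [map_zero]; rw [eucMk_genC_zero]; rfl
      | of g =>
        show eucMk (genC (lenBar (eucMk g))) = eucMk g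
        rw [lenBar_eucMk, ← eucMk_eq_genC]
      | neg g ih =>
        have h : (QuotientAddGroup.mk (-of g) : EucSC (F := F) (d := 1))
            = -(QuotientAddGroup.mk (of g)) := rfl
        rw [h]; erw [map_neg]; rw [eucMk_genC_neg, ih]; rfl
      | add u v ihu ihv =>
        have h : (QuotientAddGroup.mk (u + v) : EucSC (F := F) (d := 1))
            = QuotientAddGroup.mk u + QuotientAddGroup.mk v := rfl
        rw [h]; erw [map_add]; rw [eucMk_genC_add, ihu, ihv]; rfl
  have right_inv : ∀ c : F, lenBar (eucMk (genC c)) = c := by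
    intro c
    rw [lenBar_eucMk, len_genC]
  refine ⟨{ toFun := lenBar, invFun := fun c => eucMk (genC c),
            left_inv := left_inv, right_inv := right_inv,
            map_add' := map_add lenBar }, ?_⟩
  intro g
  show lenBar (eucMk g) = _
  rw [lenBar_eucMk, len]

end
end
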